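/- arXiv:1111.6659 — 2 statements merged into one kernel-verified Lean document; each statement's English description precedes it below -/
import Mathlib

section
/- Improved upper bound, DD-case (Proposition 3.2): Assume μ and ν are locally finite on E. Define λ^{DD} = inf{ D(f) : f absolutely continuous with compact support in E, ∫_E f² dμ = 1 }, (κ^{DD})^{-1} = inf_{x<y} [ ν((−M,x))^{-1} + ν((y,N))^{-1} ] μ((x,y))^{-1}, and (κ̄^{DD})^{-1} = inf_{−M<x<y<N} ( ν((−M,x))^{-1} + ν([y,N))^{-1} ) · { μ((x,y)) + ∫_{(−M,x)} [1 − ν((z,x))/ν((−M,x))]² μ(dz) + ∫_{(y,N)} [1 − ν((y,z))/ν((y,N))]² μ(dz) }^{-1}. Then λ^{DD} ≤ (κ̄^{DD})^{-1} ≤ (κ^{DD})^{-1}. -/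
/-!
Fix `x < y` in `E`. For `p < x` and `y < q` in `E`, the function equal to `1` on `[x, y]`,
to `ν(p, z) / ν(p, x)` on `[p, x]`, to `ν(z, q) / ν(y, q)` on `[y, q]` and to `0` elsewhere
interpolates harmonically (it is affine in the scale `∫ e^{-C}`). Since `(d/dz) ν(p, z) = e^{-C}`,
its energy is `ν(p, x)⁻¹ + ν(y, q)⁻¹`, while its squared `μ`-mass is at least `μ(x, y)` plus the
two integrals in `κ̄` with `(-M, x)`, `(y, N)` replaced by `(p, x)`, `(y, q)`. Composing with a
`C¹` ramp that is `δ`-close to the identity rounds off its four corners at an energy cost factor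
`(1 - 2δ)⁻¹`, which makes it admissible for `λ^{DD}`. Letting `p ↓ -M`, `q ↑ N` and `δ → 0`,
continuity of `ν` from below handles the energies and Fatou's lemma the masses. The bound
`κ̄⁻¹ ≤ κ⁻¹` is monotonicity.
-/

open MeasureTheory Set Filter Topology intervalIntegral
open scoped ENNReal

section Ramp

noncomputable def trapezoid (δ t : ℝ) : ℝ := max 0 (min 1 (min (t / δ) ((1 - t) / δ)))

variable {δ : ℝ}

lemma continuous_trapezoid (δ : ℝ) : Continuous (trapezoid δ) := by
  unfold trapezoid; fun_prop

lemma trapezoid_nonneg (δ t : ℝ) : 0 ≤ trapezoid δ t := le_max_left _ _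

lemma trapezoid_le_one (δ t : ℝ) : trapezoid δ t ≤ 1 :=
  max_le zero_le_one (min_le_left _ _)

lemma trapezoid_eq_zero (hδ : 0 < δ) {t : ℝ} (ht : t ≤ 0 ∨ 1 ≤ t) :
    trapezoid δ t = 0 := by
  refine max_eq_left (min_le_of_right_le ?_)
  rcases ht with ht | ht
  · exact min_le_of_left_le (div_nonpos_of_nonpos_of_nonneg ht hδ.le)
  · exact min_le_of_right_le (div_nonpos_of_nonpos_of_nonneg (by linarith) hδ.le)

lemma trapezoid_eq_one (hδ : 0 < δ) {t : ℝ} (h₁ : δ ≤ t) (h₂ : t ≤ 1 - δ) :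
    trapezoid δ t = 1 := by
  have : 1 ≤ min (t / δ) ((1 - t) / δ) :=
    le_min ((one_le_div hδ).2 h₁) ((one_le_div hδ).2 (by linarith))
  rw [trapezoid, min_eq_left this, max_eq_right zero_le_one]

lemma one_sub_two_mul_le_integral_trapezoid (hδ : 0 < δ) (hδ' : δ < 1 / 2) :
    1 - 2 * δ ≤ ∫ s in (0 : ℝ)..1, trapezoid δ s :=
  calc 1 - 2 * δ = ∫ s in δ..(1 - δ), trapezoid δ s := by
        rw [integral_congr (g := fun _ => (1 : ℝ)) fun s hs => ?_]
        · simp only [intervalIntegral.integral_const, smul_eq_mul, mul_one]; ring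
        rw [uIcc_of_le (by linarith)] at hs
        exact trapezoid_eq_one hδ hs.1 hs.2
    _ ≤ ∫ s in (0 : ℝ)..1, trapezoid δ s :=
        integral_mono_interval hδ.le (by linarith) (by linarith)
          (Eventually.of_forall (trapezoid_nonneg δ))
          ((continuous_trapezoid δ).intervalIntegrable (μ := volume) _ _)

noncomputable def rampSlope (δ t : ℝ) : ℝ :=
  trapezoid δ t / ∫ s in (0 : ℝ)..1, trapezoid δ s

noncomputable def ramp (δ t : ℝ) : ℝ := ∫ s in (0 : ℝ)..t, rampSlope δ s

lemma continuous_rampSlope (δ : ℝ) : Continuous (rampSlope δ) :=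
  (continuous_trapezoid δ).div_const _

lemma intervalIntegrable_rampSlope (δ a b : ℝ) : IntervalIntegrable (rampSlope δ) volume a b :=
  (continuous_rampSlope δ).intervalIntegrable a b

lemma rampSlope_nonneg (hδ : 0 < δ) (hδ' : δ < 1 / 2) (t : ℝ) : 0 ≤ rampSlope δ t :=
  div_nonneg (trapezoid_nonneg δ t)
    ((one_sub_two_mul_le_integral_trapezoid hδ hδ').trans' (by linarith))

lemma rampSlope_le (hδ : 0 < δ) (hδ' : δ < 1 / 2) (t : ℝ) :
    rampSlope δ t ≤ (1 - 2 * δ)⁻¹ := by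
  have h := one_sub_two_mul_le_integral_trapezoid hδ hδ'
  rw [rampSlope, div_eq_mul_inv]
  exact mul_le_of_le_one_left (inv_nonneg.2 (by linarith)) (trapezoid_le_one δ t) |>.trans
    (inv_anti₀ (by linarith) h)

lemma rampSlope_eq_zero (hδ : 0 < δ) {t : ℝ} (ht : t ≤ 0 ∨ 1 ≤ t) :
    rampSlope δ t = 0 := by
  rw [rampSlope, trapezoid_eq_zero hδ ht, zero_div]

lemma ramp_one (hδ : 0 < δ) (hδ' : δ < 1 / 2) : ramp δ 1 = 1 := by
  simp only [ramp, rampSlope]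
  rw [intervalIntegral.integral_div]
  exact div_self ((one_sub_two_mul_le_integral_trapezoid hδ hδ').trans_lt' (by linarith)).ne'

lemma hasDerivAt_ramp (δ t : ℝ) : HasDerivAt (ramp δ) (rampSlope δ t) t :=
  integral_hasDerivAt_right (intervalIntegrable_rampSlope δ _ _)
    ((continuous_rampSlope δ).stronglyMeasurableAtFilter _ _)
    (continuous_rampSlope δ).continuousAt

lemma ramp_eq_zero (hδ : 0 < δ) {t : ℝ} (ht : t ≤ 0) : ramp δ t = 0 := by
  rw [ramp, integral_congr (g := fun _ => (0 : ℝ)) fun s hs => ?_, intervalIntegral.integral_zero]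
  rw [uIcc_of_ge ht] at hs
  exact rampSlope_eq_zero hδ (Or.inl hs.2)

lemma ramp_eq_one (hδ : 0 < δ) (hδ' : δ < 1 / 2) {t : ℝ} (ht : 1 ≤ t) : ramp δ t = 1 := by
  rw [ramp, ← integral_add_adjacent_intervals (intervalIntegrable_rampSlope δ 0 1)
    (intervalIntegrable_rampSlope δ 1 t), ← ramp, ramp_one hδ hδ',
    integral_congr (g := fun _ => (0 : ℝ)) fun s hs => ?_, intervalIntegral.integral_zero,
    add_zero]
  rw [uIcc_of_le ht] at hs
  exact rampSlope_eq_zero hδ (Or.inr hs.1)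

lemma monotone_ramp (hδ : 0 < δ) (hδ' : δ < 1 / 2) : Monotone (ramp δ) :=
  monotone_of_hasDerivAt_nonneg (hasDerivAt_ramp δ) (rampSlope_nonneg hδ hδ')

lemma ramp_nonneg (hδ : 0 < δ) (hδ' : δ < 1 / 2) (t : ℝ) : 0 ≤ ramp δ t :=
  (ramp_eq_zero hδ (min_le_right t 0)).symm.le.trans (monotone_ramp hδ hδ' (min_le_left t 0))

lemma ramp_le_one (hδ : 0 < δ) (hδ' : δ < 1 / 2) (t : ℝ) : ramp δ t ≤ 1 :=
  (monotone_ramp hδ hδ' (le_max_left t 1)).trans (ramp_eq_one hδ hδ' (le_max_right t 1)).le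

lemma abs_ramp_le_one (hδ : 0 < δ) (hδ' : δ < 1 / 2) (t : ℝ) : |ramp δ t| ≤ 1 :=
  abs_le.2 ⟨(neg_nonpos.2 zero_le_one).trans (ramp_nonneg hδ hδ' t), ramp_le_one hδ hδ' t⟩

lemma one_sub_div_le_ramp (hδ : 0 < δ) (hδ' : δ < 1 / 2) {t : ℝ} (ht : t ≤ 1) :
    1 - (1 - t) / (1 - 2 * δ) ≤ ramp δ t := by
  have hsplit := integral_add_adjacent_intervals
    (intervalIntegrable_rampSlope δ 0 t) (intervalIntegrable_rampSlope δ t 1)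
  have hbound : ∫ s in t..1, rampSlope δ s ≤ (1 - t) / (1 - 2 * δ) := by
    simpa [div_eq_mul_inv] using integral_mono_on ht
      (intervalIntegrable_rampSlope δ t 1) (intervalIntegrable_const (μ := volume))
      fun s _ => rampSlope_le hδ hδ' s
  rw [← ramp, ← ramp, ramp_one hδ hδ'] at hsplit
  linarith

lemma integral_rampSlope_sq_le (hδ : 0 < δ) (hδ' : δ < 1 / 2) :
    ∫ t in (0 : ℝ)..1, rampSlope δ t ^ 2 ≤ (1 - 2 * δ)⁻¹ :=
  calc ∫ t in (0 : ℝ)..1, rampSlope δ t ^ 2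
      ≤ ∫ t in (0 : ℝ)..1, (1 - 2 * δ)⁻¹ * rampSlope δ t :=
        integral_mono_on zero_le_one (((continuous_rampSlope δ).pow 2).intervalIntegrable _ _)
          (((continuous_rampSlope δ).const_mul _).intervalIntegrable _ _) fun t _ => by
            rw [sq]
            exact mul_le_mul_of_nonneg_right (rampSlope_le hδ hδ' t) (rampSlope_nonneg hδ hδ' t)
    _ = (1 - 2 * δ)⁻¹ := by
        rw [intervalIntegral.integral_const_mul, ← ramp, ramp_one hδ hδ', mul_one]

end Ramp

/-- For `W = e^{-C}` this is the harmonic function of the generator with boundary values `0` at `p`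
and `1` at `x`, whichever of `p`, `x` is smaller. -/
noncomputable def normalizedScale (W : ℝ → ℝ) (p x z : ℝ) : ℝ :=
  (∫ w in p..z, W w) / ∫ w in p..x, W w

section NormalizedScale

variable {E : Set ℝ} {W : ℝ → ℝ} {p x z : ℝ}

lemma integral_nonneg_of_pos (hW : ∀ z, 0 < W z) {a b : ℝ} (hab : a ≤ b) :
    0 ≤ ∫ w in a..b, W w :=
  integral_nonneg hab fun w _ => (hW w).le

lemma integral_nonpos_of_pos (hW : ∀ z, 0 < W z) {a b : ℝ} (hab : b ≤ a) :
    ∫ w in a..b, W w ≤ 0 := by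
  rw [integral_symm]; exact neg_nonpos.2 (integral_nonneg_of_pos hW hab)

lemma intervalIntegrable_of_mem (hE : E.OrdConnected) (hWc : ContinuousOn W E) {a b : ℝ}
    (ha : a ∈ E) (hb : b ∈ E) : IntervalIntegrable W volume a b :=
  (hWc.mono (hE.uIcc_subset ha hb)).intervalIntegrable

lemma integral_pos_of_pos (hE : E.OrdConnected) (hWc : ContinuousOn W E) (hW : ∀ z, 0 < W z)
    {a b : ℝ} (ha : a ∈ E) (hb : b ∈ E) (hab : a < b) : 0 < ∫ w in a..b, W w :=
  intervalIntegral_pos_of_pos_on (intervalIntegrable_of_mem hE hWc ha hb) (fun w _ => hW w) hab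

lemma integral_ne_zero_of_ne (hE : E.OrdConnected) (hWc : ContinuousOn W E) (hW : ∀ z, 0 < W z)
    {a b : ℝ} (ha : a ∈ E) (hb : b ∈ E) (hab : a ≠ b) : ∫ w in a..b, W w ≠ 0 := by
  rcases hab.lt_or_gt with h | h
  · exact (integral_pos_of_pos hE hWc hW ha hb h).ne'
  · rw [integral_symm, neg_ne_zero]; exact (integral_pos_of_pos hE hWc hW hb ha h).ne'

lemma hasDerivAt_integral_of_mem (hEo : IsOpen E) (hE : E.OrdConnected) (hWc : ContinuousOn W E)
    (hp : p ∈ E) (hz : z ∈ E) : HasDerivAt (fun z => ∫ w in p..z, W w) (W z) z :=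
  integral_hasDerivAt_right (intervalIntegrable_of_mem hE hWc hp hz)
    (hWc.stronglyMeasurableAtFilter hEo z hz) (hWc.continuousAt (hEo.mem_nhds hz))

lemma hasDerivAt_normalizedScale (hEo : IsOpen E) (hE : E.OrdConnected) (hWc : ContinuousOn W E)
    (hp : p ∈ E) (hz : z ∈ E) :
    HasDerivAt (normalizedScale W p x) (W z / ∫ w in p..x, W w) z :=
  (hasDerivAt_integral_of_mem hEo hE hWc hp hz).div_const _

lemma hasDerivAt_ramp_normalizedScale (hEo : IsOpen E) (hE : E.OrdConnected)
    (hWc : ContinuousOn W E) (hp : p ∈ E) (hz : z ∈ E) {δ : ℝ} :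
    HasDerivAt (fun z => ramp δ (normalizedScale W p x z))
      (rampSlope δ (normalizedScale W p x z) * (W z / ∫ w in p..x, W w)) z :=
  (hasDerivAt_ramp δ _).comp z (hasDerivAt_normalizedScale hEo hE hWc hp hz)

lemma normalizedScale_left : normalizedScale W p x p = 0 := by
  simp [normalizedScale]

lemma one_sub_normalizedScale (hE : E.OrdConnected) (hWc : ContinuousOn W E) (hW : ∀ z, 0 < W z)
    (hp : p ∈ E) (hx : x ∈ E) (hz : z ∈ E) (hpx : p ≠ x) :
    1 - normalizedScale W p x z = (∫ w in z..x, W w) / ∫ w in p..x, W w := by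
  have hG := integral_ne_zero_of_ne hE hWc hW hp hx hpx
  rw [normalizedScale, ← integral_add_adjacent_intervals (intervalIntegrable_of_mem hE hWc hp hz)
    (intervalIntegrable_of_mem hE hWc hz hx)] at *
  field_simp
  ring

lemma normalizedScale_nonpos (hW : ∀ z, 0 < W z) (hz : z ≤ p ∧ p < x ∨ x < p ∧ p ≤ z) :
    normalizedScale W p x z ≤ 0 := by
  rcases hz with ⟨hzp, hpx⟩ | ⟨hxp, hpz⟩
  · exact div_nonpos_of_nonpos_of_nonneg (integral_nonpos_of_pos hW hzp)
      (integral_nonneg_of_pos hW hpx.le)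
  · exact div_nonpos_of_nonneg_of_nonpos (integral_nonneg_of_pos hW hpz)
      (integral_nonpos_of_pos hW hxp.le)

lemma one_le_normalizedScale (hE : E.OrdConnected) (hWc : ContinuousOn W E) (hW : ∀ z, 0 < W z)
    (hp : p ∈ E) (hx : x ∈ E) (hz : z ∈ E) (hxz : p < x ∧ x ≤ z ∨ z ≤ x ∧ x < p) :
    1 ≤ normalizedScale W p x z := by
  have hpx : p ≠ x := by rcases hxz with h | h; exacts [h.1.ne, h.2.ne']
  suffices (∫ w in z..x, W w) / ∫ w in p..x, W w ≤ 0 by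
    rw [← one_sub_normalizedScale hE hWc hW hp hx hz hpx] at this
    linarith
  rcases hxz with ⟨hpx, hxz⟩ | ⟨hzx, hxp⟩
  · exact div_nonpos_of_nonpos_of_nonneg (integral_nonpos_of_pos hW hxz)
      (integral_nonneg_of_pos hW hpx.le)
  · exact div_nonpos_of_nonneg_of_nonpos (integral_nonneg_of_pos hW hzx)
      (integral_nonpos_of_pos hW hxp.le)

lemma normalizedScale_nonpos_or_one_le (hE : E.OrdConnected) (hWc : ContinuousOn W E)
    (hW : ∀ z, 0 < W z) (hp : p ∈ E) (hx : x ∈ E) (hz : z ∈ E) (hpx : p ≠ x)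
    (hzI : z ∉ uIoc p x) : normalizedScale W p x z ≤ 0 ∨ 1 ≤ normalizedScale W p x z := by
  rcases hpx.lt_or_gt with h | h
  · rw [uIoc_of_le h.le, mem_Ioc, not_and_or, not_lt, not_le] at hzI
    rcases hzI with h' | h'
    · exact Or.inl (normalizedScale_nonpos hW (Or.inl ⟨h', h⟩))
    · exact Or.inr (one_le_normalizedScale hE hWc hW hp hx hz (Or.inl ⟨h, h'.le⟩))
  · rw [uIoc_of_ge h.le, mem_Ioc, not_and_or, not_lt, not_le] at hzI
    rcases hzI with h' | h'
    · exact Or.inr (one_le_normalizedScale hE hWc hW hp hx hz (Or.inr ⟨h', h⟩))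
    · exact Or.inl (normalizedScale_nonpos hW (Or.inr ⟨h, h'.le⟩))

lemma normalizedScale_le_one (hE : E.OrdConnected)
    (hWc : ContinuousOn W E) (hW : ∀ z, 0 < W z) (hp : p ∈ E) (hx : x ∈ E) (hpx : p ≠ x)
    (hz : z ∈ uIcc p x) : normalizedScale W p x z ≤ 1 := by
  have hzE := hE.uIcc_subset hp hx hz
  suffices 0 ≤ (∫ w in z..x, W w) / ∫ w in p..x, W w by
    rw [← one_sub_normalizedScale hE hWc hW hp hx hzE hpx] at this; linarith
  rcases hpx.lt_or_gt with h | h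
  · rw [uIcc_of_le h.le] at hz
    exact div_nonneg (integral_nonneg_of_pos hW hz.2) (integral_nonneg_of_pos hW h.le)
  · rw [uIcc_of_ge h.le] at hz
    exact div_nonneg_of_nonpos (integral_nonpos_of_pos hW hz.1) (integral_nonpos_of_pos hW h.le)

lemma one_sub_div_le_ramp_normalizedScale {δ : ℝ}
    (hE : E.OrdConnected) (hWc : ContinuousOn W E) (hW : ∀ z, 0 < W z) (hδ : 0 < δ)
    (hδ' : δ < 1 / 2) (hp : p ∈ E) (hx : x ∈ E) (hpx : p ≠ x) (hz : z ∈ uIcc p x) :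
    1 - (∫ w in z..x, W w) / (∫ w in p..x, W w) / (1 - 2 * δ)
      ≤ ramp δ (normalizedScale W p x z) := by
  rw [← one_sub_normalizedScale hE hWc hW hp hx (hE.uIcc_subset hp hx hz) hpx]
  exact one_sub_div_le_ramp hδ hδ' (normalizedScale_le_one hE hWc hW hp hx hpx hz)

lemma differentiableOn_ramp_normalizedScale (hEo : IsOpen E) (hE : E.OrdConnected)
    (hWc : ContinuousOn W E) (hp : p ∈ E) {δ : ℝ} :
    DifferentiableOn ℝ (fun z => ramp δ (normalizedScale W p x z)) E := fun _ hz =>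
  (hasDerivAt_ramp_normalizedScale hEo hE hWc hp hz).differentiableAt.differentiableWithinAt

end NormalizedScale

noncomputable def dirichletEnergy (E : Set ℝ) (w f : ℝ → ℝ) : ℝ≥0∞ :=
  ∫⁻ x in E, ENNReal.ofReal ((deriv f x) ^ 2 * w x)

/-- `λ^{DD}`, for the Dirichlet form with weight `w`. -/
noncomputable def lambdaDD (E : Set ℝ) (w : ℝ → ℝ) (μ : Measure ℝ) : ℝ≥0∞ :=
  ⨅ (f : ℝ → ℝ) (_ : DifferentiableOn ℝ f E) (_ : HasCompactSupport f)
    (_ : tsupport f ⊆ E) (_ : ∫⁻ x, ENNReal.ofReal ((f x) ^ 2) ∂μ = 1), dirichletEnergy E w f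

lemma lambdaDD_mul_le {E : Set ℝ} {w f : ℝ → ℝ} {μ : Measure ℝ}
    (hf : DifferentiableOn ℝ f E) (hfc : HasCompactSupport f) (hfE : tsupport f ⊆ E)
    (hP : ∫⁻ x, ENNReal.ofReal (f x ^ 2) ∂μ ≠ ⊤) :
    lambdaDD E w μ * ∫⁻ x, ENNReal.ofReal (f x ^ 2) ∂μ ≤ dirichletEnergy E w f := by
  set P := ∫⁻ x, ENNReal.ofReal (f x ^ 2) ∂μ
  rcases eq_or_ne P 0 with hP0 | hP0
  · rw [hP0, mul_zero]; exact zero_le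
  set c : ℝ := (Real.sqrt P.toReal)⁻¹
  have hc : ENNReal.ofReal (c ^ 2) = P⁻¹ := by
    rw [inv_pow, Real.sq_sqrt ENNReal.toReal_nonneg, ENNReal.ofReal_inv_of_pos
      (ENNReal.toReal_pos hP0 hP), ENNReal.ofReal_toReal hP]
  have hscale : ∀ r s : ℝ,
      ENNReal.ofReal ((c * r) ^ 2 * s) = P⁻¹ * ENNReal.ofReal (r ^ 2 * s) :=
    fun r s => by rw [← hc, ← ENNReal.ofReal_mul (sq_nonneg c)]; ring_nf
  have hnorm : ∫⁻ x, ENNReal.ofReal ((c * f x) ^ 2) ∂μ = 1 := by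
    rw [lintegral_congr fun x => by simpa using hscale (f x) 1,
      lintegral_const_mul' _ _ (ENNReal.inv_ne_top.2 hP0), ENNReal.inv_mul_cancel hP0 hP]
  have henergy : dirichletEnergy E w (fun x => c * f x) = P⁻¹ * dirichletEnergy E w f := by
    simp_rw [dirichletEnergy, deriv_const_mul_field', hscale]
    exact lintegral_const_mul' _ _ (ENNReal.inv_ne_top.2 hP0)
  have hle : lambdaDD E w μ ≤ P⁻¹ * dirichletEnergy E w f := by
    rw [← henergy]
    exact iInf_le_of_le (fun x => c * f x) <| iInf_le_of_le (hf.const_mul c) <| iInf_le_of_le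
      (hfc.mul_left (f := fun _ => c)) <| iInf_le_of_le (tsupport_mul_subset_right.trans hfE) <|
      iInf_le_of_le hnorm le_rfl
  calc lambdaDD E w μ * P ≤ P⁻¹ * dirichletEnergy E w f * P := mul_le_mul_left hle P
    _ = dirichletEnergy E w f := by
        rw [mul_comm _ P, ← mul_assoc, ENNReal.mul_inv_cancel hP0 hP, one_mul]

lemma setLIntegral_ofReal_le_abs_integral {E : Set ℝ} (hE : MeasurableSet E) {g : ℝ → ℝ}
    {p x : ℝ} (hg : ContinuousOn g (uIcc p x)) (hg0 : ∀ z, 0 ≤ g z)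
    (hgE : ∀ z ∈ E, z ∉ uIoc p x → g z = 0) :
    ∫⁻ z in E, ENNReal.ofReal (g z) ≤ ENNReal.ofReal |∫ z in p..x, g z| :=
  calc ∫⁻ z in E, ENNReal.ofReal (g z)
      ≤ ∫⁻ z in E, (uIoc p x).indicator (fun z => ENNReal.ofReal (g z)) z :=
        setLIntegral_mono' hE fun z hz => by
          by_cases hzI : z ∈ uIoc p x
          · rw [indicator_of_mem hzI]
          · rw [hgE z hz hzI, ENNReal.ofReal_zero]; exact zero_le
    _ ≤ ∫⁻ z in uIoc p x, ENNReal.ofReal (g z) := by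
        rw [← lintegral_indicator measurableSet_uIoc]; exact setLIntegral_le_lintegral _ _
    _ = ENNReal.ofReal |∫ z in p..x, g z| := by
        rw [← ofReal_integral_eq_lintegral_ofReal (intervalIntegrable_iff.1 hg.intervalIntegrable)
          (Eventually.of_forall hg0), abs_integral_eq_abs_integral_uIoc,
          abs_of_nonneg (setIntegral_nonneg measurableSet_uIoc fun z _ => hg0 z)]

section Energy

variable {E : Set ℝ} {C : ℝ → ℝ} {δ p x : ℝ}

lemma continuousOn_exp_neg (hC : ContinuousOn C E) : ContinuousOn (fun z => Real.exp (-C z)) E :=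
  Real.continuous_exp.comp_continuousOn hC.neg

lemma dirichletEnergy_ramp_normalizedScale_le (hEo : IsOpen E) (hE : E.OrdConnected)
    (hC : ContinuousOn C E) (hp : p ∈ E) (hx : x ∈ E) (hpx : p ≠ x) (hδ : 0 < δ)
    (hδ' : δ < 1 / 2) :
    dirichletEnergy E (fun z => Real.exp (C z))
        (fun z => ramp δ (normalizedScale (fun w => Real.exp (-C w)) p x z))
      ≤ ENNReal.ofReal ((1 - 2 * δ)⁻¹ / |∫ w in p..x, Real.exp (-C w)|) := by
  set W : ℝ → ℝ := fun w => Real.exp (-C w)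
  set G := ∫ w in p..x, W w
  set u := normalizedScale W p x
  have hWc : ContinuousOn W E := continuousOn_exp_neg hC
  have hW : ∀ z, 0 < W z := fun z => Real.exp_pos _
  have hG : G ≠ 0 := integral_ne_zero_of_ne hE hWc hW hp hx hpx
  have hu : ∀ z ∈ E, HasDerivAt u (W z / G) z := fun z hz =>
    hasDerivAt_normalizedScale hEo hE hWc hp hz
  set F : ℝ → ℝ := fun z => rampSlope δ (u z) ^ 2 * (W z / G) / G
  have hFc : ContinuousOn F (uIcc p x) := by
    have hI := hE.uIcc_subset hp hx
    have huc : ContinuousOn u (uIcc p x) := fun z hz =>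
      (hu z (hI hz)).continuousAt.continuousWithinAt
    exact ((((continuous_rampSlope δ).comp_continuousOn huc).pow 2).mul
      ((hWc.mono hI).div_const G)).div_const G
  -- since `W e^C = 1`, the energy density is `(rampSlope ∘ u)² u' / G`, so the energy is computed
  -- by the substitution `t = u z`
  have hF_eq : ∀ z ∈ E, (deriv (fun z => ramp δ (u z)) z) ^ 2 * Real.exp (C z) = F z := by
    intro z hz
    have he : Real.exp (C z) = (W z)⁻¹ := by simp only [W, Real.exp_neg, inv_inv]
    rw [(hasDerivAt_ramp_normalizedScale hEo hE hWc hp hz).deriv, he]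
    simp only [F, u, G]
    field_simp [(hW z).ne']
  -- off `Ι p x` the scale leaves `(0, 1)`, where the ramp is flat
  have hF_zero : ∀ z ∈ E, z ∉ uIoc p x → F z = 0 := fun z hz hzI => by
    simp only [F, u, rampSlope_eq_zero hδ
      (normalizedScale_nonpos_or_one_le hE hWc hW hp hx hz hpx hzI)]
    ring
  have hF_nonneg : ∀ z, 0 ≤ F z := fun z => by
    simp only [F]; rw [mul_div_assoc, div_div, ← sq]; positivity
  have hchange : ∫ z in p..x, F z = (∫ t in (0 : ℝ)..1, rampSlope δ t ^ 2) / G := by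
    have := integral_comp_mul_deriv (g := fun t => rampSlope δ t ^ 2)
      (fun z hz => hu z (hE.uIcc_subset hp hx hz)) ((hWc.mono (hE.uIcc_subset hp hx)).div_const G)
      ((continuous_rampSlope δ).pow 2)
    rw [show u p = 0 from normalizedScale_left, show u x = 1 from div_self hG] at this
    rw [← this, ← intervalIntegral.integral_div]
    rfl
  calc dirichletEnergy E (fun z => Real.exp (C z)) (fun z => ramp δ (u z))
      = ∫⁻ z in E, ENNReal.ofReal (F z) :=
        setLIntegral_congr_fun hEo.measurableSet fun z hz => by rw [hF_eq z hz]
    _ ≤ ENNReal.ofReal |∫ z in p..x, F z| :=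
        setLIntegral_ofReal_le_abs_integral hEo.measurableSet hFc hF_nonneg hF_zero
    _ ≤ ENNReal.ofReal ((1 - 2 * δ)⁻¹ / |G|) := by
        rw [hchange, abs_div, abs_of_nonneg (integral_nonneg zero_le_one fun t _ => sq_nonneg _)]
        exact ENNReal.ofReal_le_ofReal
          (div_le_div_of_nonneg_right (integral_rampSlope_sq_le hδ hδ') (abs_nonneg G))

lemma dirichletEnergy_mul_le (hEo : IsOpen E) {w L R : ℝ → ℝ} (hw : ∀ z ∈ E, 0 ≤ w z)
    (hwm : AEMeasurable w (volume.restrict E)) (hL : DifferentiableOn ℝ L E)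
    (hR : DifferentiableOn ℝ R E) (hL1 : ∀ z, |L z| ≤ 1) (hR1 : ∀ z, |R z| ≤ 1)
    (hLR : ∀ z ∈ E, deriv L z * deriv R z = 0) :
    dirichletEnergy E w (fun z => L z * R z) ≤ dirichletEnergy E w L + dirichletEnergy E w R := by
  have hpt : ∀ z ∈ E, (deriv (fun z => L z * R z) z) ^ 2 * w z
      ≤ (deriv L z) ^ 2 * w z + (deriv R z) ^ 2 * w z := by
    intro z hz
    rw [deriv_fun_mul (hL.differentiableAt (hEo.mem_nhds hz))
      (hR.differentiableAt (hEo.mem_nhds hz))]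
    have hL2 : L z ^ 2 ≤ 1 := by rw [← sq_abs]; exact pow_le_one₀ (abs_nonneg _) (hL1 z)
    have hR2 : R z ^ 2 ≤ 1 := by rw [← sq_abs]; exact pow_le_one₀ (abs_nonneg _) (hR1 z)
    have hcross := hLR z hz
    have hsq : (deriv L z * R z + L z * deriv R z) ^ 2
        = deriv L z ^ 2 * R z ^ 2 + L z ^ 2 * deriv R z ^ 2 := by
      linear_combination (2 * L z * R z) * hcross
    rw [hsq, ← add_mul]
    refine mul_le_mul_of_nonneg_right ?_ (hw z hz)
    nlinarith [sq_nonneg (deriv L z), sq_nonneg (deriv R z)]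
  calc dirichletEnergy E w (fun z => L z * R z)
      ≤ ∫⁻ z in E, ENNReal.ofReal ((deriv L z) ^ 2 * w z)
          + ENNReal.ofReal ((deriv R z) ^ 2 * w z) :=
        setLIntegral_mono' hEo.measurableSet fun z hz => (ENNReal.ofReal_le_ofReal (hpt z hz)).trans
          ENNReal.ofReal_add_le
    _ = dirichletEnergy E w L + dirichletEnergy E w R := lintegral_add_left' (by fun_prop) _

end Energy

noncomputable def smoothPlateau (W : ℝ → ℝ) (δ p x y q z : ℝ) : ℝ :=
  ramp δ (normalizedScale W p x z) * ramp δ (normalizedScale W q y z)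

section SmoothPlateau

variable {E : Set ℝ} {W : ℝ → ℝ} {δ p x y q : ℝ}

lemma smoothPlateau_eq_zero (hW : ∀ z, 0 < W z) (hδ : 0 < δ) (hpx : p < x) (hyq : y < q)
    {z : ℝ} (hz : z ∉ Ioo p q) : smoothPlateau W δ p x y q z = 0 := by
  rw [mem_Ioo, not_and_or, not_lt, not_lt] at hz
  rcases hz with hz | hz
  · rw [smoothPlateau, ramp_eq_zero hδ (normalizedScale_nonpos hW (Or.inl ⟨hz, hpx⟩)),
      zero_mul]
  · rw [smoothPlateau, ramp_eq_zero hδ (normalizedScale_nonpos hW (Or.inr ⟨hyq, hz⟩)),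
      mul_zero]

lemma smoothPlateau_nonneg (hδ : 0 < δ) (hδ' : δ < 1 / 2) (z : ℝ) :
    0 ≤ smoothPlateau W δ p x y q z :=
  mul_nonneg (ramp_nonneg hδ hδ' _) (ramp_nonneg hδ hδ' _)

lemma abs_smoothPlateau_le_one (hδ : 0 < δ) (hδ' : δ < 1 / 2) (z : ℝ) :
    |smoothPlateau W δ p x y q z| ≤ 1 := by
  rw [smoothPlateau, abs_mul]
  exact mul_le_one₀ (abs_ramp_le_one hδ hδ' _) (abs_nonneg _) (abs_ramp_le_one hδ hδ' _)

lemma smoothPlateau_of_le_left (hE : E.OrdConnected) (hWc : ContinuousOn W E)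
    (hW : ∀ z, 0 < W z) (hδ : 0 < δ) (hδ' : δ < 1 / 2) (hy : y ∈ E) (hq : q ∈ E)
    (hxy : x < y) (hyq : y < q) {z : ℝ} (hz : z ∈ E) (hzx : z ≤ x) :
    smoothPlateau W δ p x y q z = ramp δ (normalizedScale W p x z) := by
  rw [smoothPlateau, ramp_eq_one hδ hδ' (one_le_normalizedScale hE hWc hW hq hy hz
    (Or.inr ⟨hzx.trans hxy.le, hyq⟩)), mul_one]

lemma smoothPlateau_of_ge_right (hE : E.OrdConnected) (hWc : ContinuousOn W E)
    (hW : ∀ z, 0 < W z) (hδ : 0 < δ) (hδ' : δ < 1 / 2) (hp : p ∈ E) (hx : x ∈ E)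
    (hpx : p < x) (hxy : x < y) {z : ℝ} (hz : z ∈ E) (hyz : y ≤ z) :
    smoothPlateau W δ p x y q z = ramp δ (normalizedScale W q y z) := by
  rw [smoothPlateau, ramp_eq_one hδ hδ' (one_le_normalizedScale hE hWc hW hp hx hz
    (Or.inl ⟨hpx, hxy.le.trans hyz⟩)), one_mul]

lemma smoothPlateau_eq_one (hE : E.OrdConnected) (hWc : ContinuousOn W E)
    (hW : ∀ z, 0 < W z) (hδ : 0 < δ) (hδ' : δ < 1 / 2) (hp : p ∈ E) (hx : x ∈ E)
    (hy : y ∈ E) (hq : q ∈ E) (hpx : p < x) (hyq : y < q) {z : ℝ} (hz : z ∈ Icc x y) :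
    smoothPlateau W δ p x y q z = 1 := by
  have hzE : z ∈ E := hE.out hx hy hz
  rw [smoothPlateau, ramp_eq_one hδ hδ' (one_le_normalizedScale hE hWc hW hp hx hzE
    (Or.inl ⟨hpx, hz.1⟩)), ramp_eq_one hδ hδ' (one_le_normalizedScale hE hWc hW hq hy hzE
    (Or.inr ⟨hz.2, hyq⟩)), mul_one]

lemma differentiableOn_smoothPlateau (hEo : IsOpen E) (hE : E.OrdConnected)
    (hWc : ContinuousOn W E) (hp : p ∈ E) (hq : q ∈ E) :
    DifferentiableOn ℝ (smoothPlateau W δ p x y q) E :=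
  (differentiableOn_ramp_normalizedScale hEo hE hWc hp).mul
    (differentiableOn_ramp_normalizedScale hEo hE hWc hq)

end SmoothPlateau

lemma dirichletEnergy_smoothPlateau_le {E : Set ℝ} {C : ℝ → ℝ} {δ p x y q : ℝ}
    (hEo : IsOpen E) (hE : E.OrdConnected) (hC : ContinuousOn C E) (hδ : 0 < δ)
    (hδ' : δ < 1 / 2) (hp : p ∈ E) (hx : x ∈ E) (hy : y ∈ E) (hq : q ∈ E) (hpx : p < x)
    (hxy : x < y) (hyq : y < q) :
    dirichletEnergy E (fun z => Real.exp (C z))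
        (smoothPlateau (fun w => Real.exp (-C w)) δ p x y q)
      ≤ ENNReal.ofReal ((1 - 2 * δ)⁻¹ / ∫ w in p..x, Real.exp (-C w))
        + ENNReal.ofReal ((1 - 2 * δ)⁻¹ / ∫ w in y..q, Real.exp (-C w)) := by
  set W : ℝ → ℝ := fun w => Real.exp (-C w)
  have hWc : ContinuousOn W E := continuousOn_exp_neg hC
  have hW : ∀ z, 0 < W z := fun z => Real.exp_pos _
  -- the two ramps never move at the same point
  have hdisjoint : ∀ z ∈ E, deriv (fun z => ramp δ (normalizedScale W p x z)) z
      * deriv (fun z => ramp δ (normalizedScale W q y z)) z = 0 := by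
    intro z hz
    rw [(hasDerivAt_ramp_normalizedScale hEo hE hWc hp hz).deriv,
      (hasDerivAt_ramp_normalizedScale hEo hE hWc hq hz).deriv]
    rcases le_or_gt z x with hzx | hxz
    · rw [rampSlope_eq_zero hδ (Or.inr (one_le_normalizedScale hE hWc hW hq hy hz
        (Or.inr ⟨hzx.trans hxy.le, hyq⟩)))]
      ring
    · rw [rampSlope_eq_zero hδ (Or.inr (one_le_normalizedScale hE hWc hW hp hx hz
        (Or.inl ⟨hpx, hxz.le⟩)))]
      ring
  refine (dirichletEnergy_mul_le hEo (fun z _ => (Real.exp_pos _).le)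
    ((Real.continuous_exp.comp_continuousOn hC).aemeasurable hEo.measurableSet)
    (differentiableOn_ramp_normalizedScale hEo hE hWc hp)
    (differentiableOn_ramp_normalizedScale hEo hE hWc hq) (fun _ => abs_ramp_le_one hδ hδ' _)
    (fun _ => abs_ramp_le_one hδ hδ' _) hdisjoint).trans
    (add_le_add ?_ ?_)
  · have h := dirichletEnergy_ramp_normalizedScale_le hEo hE hC hp hx hpx.ne hδ hδ'
    rwa [abs_of_pos (integral_pos_of_pos hE hWc hW hp hx hpx)] at h
  · have h := dirichletEnergy_ramp_normalizedScale_le hEo hE hC hq hy hyq.ne' hδ hδ'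
    rwa [integral_symm, abs_neg, abs_of_pos (integral_pos_of_pos hE hWc hW hy hq hyq)] at h

section Density

variable {E : Set ℝ} {f : ℝ → ℝ} {a b : ℝ}

lemma withDensity_Ioo_eq (hf : ContinuousOn f E) (hf0 : ∀ z ∈ E, 0 ≤ f z) (hab : a ≤ b)
    (hE : Icc a b ⊆ E) :
    (volume.restrict E).withDensity (fun z => ENNReal.ofReal (f z)) (Ioo a b)
      = ENNReal.ofReal (∫ z in a..b, f z) := by
  rw [withDensity_apply _ measurableSet_Ioo, Measure.restrict_restrict measurableSet_Ioo,
    inter_eq_self_of_subset_left (Ioo_subset_Icc_self.trans hE),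
    ← ofReal_integral_eq_lintegral_ofReal
      ((hf.mono hE).integrableOn_Icc.mono_set Ioo_subset_Icc_self)
      ((ae_restrict_mem measurableSet_Ioo).mono fun z hz => hf0 z (hE (Ioo_subset_Icc_self hz))),
    integral_of_le hab, integral_Ioc_eq_integral_Ioo]

lemma withDensity_Ioo_pos (hf : ContinuousOn f E) (hf0 : ∀ z ∈ E, 0 < f z) (hab : a < b)
    (hE : Icc a b ⊆ E) :
    0 < (volume.restrict E).withDensity (fun z => ENNReal.ofReal (f z)) (Ioo a b) := by
  rw [withDensity_Ioo_eq hf (fun z hz => (hf0 z hz).le) hab.le hE]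
  refine ENNReal.ofReal_pos.2 (intervalIntegral_pos_of_pos_on ?_ (fun z hz =>
    hf0 z (hE (Ioo_subset_Icc_self hz))) hab)
  exact (hf.mono (by rwa [uIcc_of_le hab.le])).intervalIntegrable

lemma ae_mem_withDensity (hE : MeasurableSet E) (g : ℝ → ℝ≥0∞) :
    ∀ᵐ z ∂(volume.restrict E).withDensity g, z ∈ E :=
  (withDensity_absolutelyContinuous _ _).ae_le (ae_restrict_mem hE)

end Density

lemma tendsto_measure_Ioo_Iio {ν : Measure ℝ} {E : Set ℝ} (hE : E.OrdConnected)
    (hνE : ∀ᵐ z ∂ν, z ∈ E) {t : ℕ → ℝ} {x : ℝ} (hx : x ∈ E) (ht : Antitone t)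
    (htE : ∀ n, t n ∈ E)    (ht_lim : ∀ z ∈ E, ∀ᶠ n in atTop, t n < z) :
    Tendsto (fun n => ν (Ioo (t n) x)) atTop (𝓝 (ν (Iio x))) := by
  have hunion : ⋃ n, Ioo (t n) x = Iio x ∩ E := by
    ext z
    simp only [mem_iUnion, mem_Ioo, mem_inter_iff, mem_Iio]
    constructor
    · rintro ⟨n, hn, hzx⟩
      exact ⟨hzx, hE.out (htE n) hx ⟨hn.le, hzx.le⟩⟩
    · rintro ⟨hzx, hz⟩
      exact ((ht_lim z hz).exists).imp fun n hn => ⟨hn, hzx⟩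
  have h := tendsto_measure_iUnion_atTop (μ := ν) (s := fun n => Ioo (t n) x)
    fun m n hmn => Ioo_subset_Ioo_left (ht hmn)
  rwa [hunion, measure_inter_conull (ae_iff.1 hνE)] at h

lemma tendsto_measure_Ioo_Ioi {ν : Measure ℝ} {E : Set ℝ} (hE : E.OrdConnected)
    (hνE : ∀ᵐ z ∂ν, z ∈ E) {s : ℕ → ℝ} {y : ℝ} (hy : y ∈ E) (hs : Monotone s)
    (hsE : ∀ n, s n ∈ E)    (hs_lim : ∀ z ∈ E, ∀ᶠ n in atTop, z < s n) :
    Tendsto (fun n => ν (Ioo y (s n))) atTop (𝓝 (ν (Ioi y))) := by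
  have hunion : ⋃ n, Ioo y (s n) = Ioi y ∩ E := by
    ext z
    simp only [mem_iUnion, mem_Ioo, mem_inter_iff, mem_Ioi]
    constructor
    · rintro ⟨n, hyz, hn⟩
      exact ⟨hyz, hE.out hy (hsE n) ⟨hyz.le, hn.le⟩⟩
    · rintro ⟨hyz, hz⟩
      exact ((hs_lim z hz).exists).imp fun n hn => ⟨hyz, hn⟩
  have h := tendsto_measure_iUnion_atTop (μ := ν) (s := fun n => Ioo y (s n))
    fun m n hmn => Ioo_subset_Ioo_right (hs hmn)
  rwa [hunion, measure_inter_conull (ae_iff.1 hνE)] at h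

lemma lintegral_ofReal_sq_le_measure {μ : Measure ℝ} {f : ℝ → ℝ} {s : Set ℝ}
    (hs : MeasurableSet s) (hf : ∀ z, |f z| ≤ 1) (hfs : ∀ z ∉ s, f z = 0) :
    ∫⁻ z, ENNReal.ofReal (f z ^ 2) ∂μ ≤ μ s := by
  rw [← lintegral_indicator_one hs]
  refine lintegral_mono fun z => ?_
  by_cases hz : z ∈ s
  · rw [indicator_of_mem hz, Pi.one_apply, ENNReal.ofReal_le_one, ← sq_abs]
    exact pow_le_one₀ (abs_nonneg _) (hf z)
  · simp [hfs z hz]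

lemma le_liminf_lintegral_of_le_liminf {μ : Measure ℝ} {E : Set ℝ} (hμE : ∀ᵐ z ∂μ, z ∈ E)
    {F : ℕ → ℝ → ℝ≥0∞} (hF : ∀ n, AEMeasurable (F n) μ) {gL gR : ℝ → ℝ≥0∞} {x y : ℝ}
    (hxy : x ≤ y)
    (hmid : ∀ z ∈ Ioo x y, 1 ≤ liminf (fun n => F n z) atTop)
    (hleft : ∀ z ∈ E, z < x → gL z ≤ liminf (fun n => F n z) atTop)
    (hright : ∀ z ∈ E, y < z → gR z ≤ liminf (fun n => F n z) atTop) :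
    μ (Ioo x y) + (∫⁻ z in Iio x, gL z ∂μ) + (∫⁻ z in Ioi y, gR z ∂μ)
      ≤ liminf (fun n => ∫⁻ z, F n z ∂μ) atTop := by
  set Φ := fun z => liminf (fun n => F n z) atTop
  have hpiece : ∀ {S : Set ℝ} {g : ℝ → ℝ≥0∞}, MeasurableSet S →
      (∀ z ∈ E, z ∈ S → g z ≤ Φ z) →
      ∫⁻ z in S, g z ∂μ ≤ ∫⁻ z in S, Φ z ∂μ := fun hS hg =>
    lintegral_mono_ae ((ae_restrict_iff' hS).2 (hμE.mono fun z hz hzS => hg z hz hzS))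
  have hdisj₁ : Disjoint (Ioo x y) (Iio x) := disjoint_left.2 fun z hz hz' => hz'.not_gt hz.1
  have hdisj₂ : Disjoint (Ioo x y ∪ Iio x) (Ioi y) := disjoint_left.2 fun z hz hz' => by
    rcases hz with hz | hz
    exacts [hz.2.not_gt hz', (mem_Iio.1 hz).not_gt (hxy.trans_lt hz')]
  calc μ (Ioo x y) + (∫⁻ z in Iio x, gL z ∂μ) + (∫⁻ z in Ioi y, gR z ∂μ)
      ≤ (∫⁻ z in Ioo x y, Φ z ∂μ) + (∫⁻ z in Iio x, Φ z ∂μ)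
          + ∫⁻ z in Ioi y, Φ z ∂μ := by
        rw [← setLIntegral_one]
        exact add_le_add (add_le_add (hpiece measurableSet_Ioo fun z _ hz => hmid z hz)
          (hpiece measurableSet_Iio hleft)) (hpiece measurableSet_Ioi hright)
    _ = ∫⁻ z in Ioo x y ∪ Iio x ∪ Ioi y, Φ z ∂μ := by
        rw [lintegral_union measurableSet_Ioi hdisj₂, lintegral_union measurableSet_Iio hdisj₁]
    _ ≤ ∫⁻ z, Φ z ∂μ := setLIntegral_le_lintegral _ _
    _ ≤ liminf (fun n => ∫⁻ z, F n z ∂μ) atTop := lintegral_liminf_le' hF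

lemma exists_seq_antitone_tendsto_EReal {a : EReal} {x : ℝ} (hax : a < x) :
    ∃ t : ℕ → ℝ, Antitone t ∧ (∀ n, a < t n ∧ t n < x) ∧
      ∀ z : ℝ, a < z → ∀ᶠ n in atTop, t n < z := by
  obtain ⟨u, hu_anti, hu_mem, hu_lim⟩ := exists_seq_strictAnti_tendsto' hax
  have hu_coe : ∀ n, ((u n).toReal : EReal) = u n := fun n =>
    EReal.coe_toReal ((hu_mem n).2.trans (EReal.coe_lt_top x)).ne (hu_mem n).1.ne_bot
  refine ⟨fun n => (u n).toReal, fun m n hmn => ?_, fun n => ?_, fun z hz => ?_⟩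
  · rw [← EReal.coe_le_coe_iff, hu_coe, hu_coe]; exact hu_anti.antitone hmn
  · rw [← EReal.coe_lt_coe_iff, hu_coe]; exact hu_mem n
  · filter_upwards [hu_lim.eventually (eventually_lt_nhds hz)] with n hn
    rwa [← EReal.coe_lt_coe_iff, hu_coe]

lemma exists_seq_monotone_tendsto_EReal {b : EReal} {y : ℝ} (hyb : (y : EReal) < b) :
    ∃ s : ℕ → ℝ, Monotone s ∧ (∀ n, y < s n ∧ (s n : EReal) < b) ∧
      ∀ z : ℝ, (z : EReal) < b → ∀ᶠ n in atTop, z < s n := by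
  obtain ⟨u, hu_mono, hu_mem, hu_lim⟩ := exists_seq_strictMono_tendsto' hyb
  have hu_coe : ∀ n, ((u n).toReal : EReal) = u n := fun n =>
    EReal.coe_toReal (hu_mem n).2.ne_top ((EReal.bot_lt_coe y).trans (hu_mem n).1).ne'
  refine ⟨fun n => (u n).toReal, fun m n hmn => ?_, fun n => ?_, fun z hz => ?_⟩
  · rw [← EReal.coe_le_coe_iff, hu_coe, hu_coe]; exact hu_mono.monotone hmn
  · rw [← EReal.coe_lt_coe_iff, hu_coe]; exact hu_mem n
  · filter_upwards [hu_lim.eventually (eventually_gt_nhds hz)] with n hn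
    rwa [← EReal.coe_lt_coe_iff, hu_coe]

lemma ordConnected_setOf_EReal (a b : EReal) :
    {x : ℝ | a < (x : EReal) ∧ (x : EReal) < b}.OrdConnected :=
  ⟨fun _ hu _ hv _ hz => ⟨hu.1.trans_le (EReal.coe_le_coe_iff.2 hz.1),
    (EReal.coe_le_coe_iff.2 hz.2).trans_lt hv.2⟩⟩

lemma isOpen_setOf_EReal (a b : EReal) : IsOpen {x : ℝ | a < (x : EReal) ∧ (x : EReal) < b} :=
  isOpen_Ioo.preimage continuous_coe_real_ereal

lemma exists_seq_tendsto_measure_Iio {M N : EReal} {E : Set ℝ}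
    (hE : E = {x : ℝ | -M < (x : EReal) ∧ (x : EReal) < N}) {ν : Measure ℝ}
    (hνE : ∀ᵐ z ∂ν, z ∈ E) {x : ℝ} (hx : x ∈ E) :
    ∃ t : ℕ → ℝ, (∀ n, t n ∈ E ∧ t n < x) ∧ (∀ z ∈ E, ∀ᶠ n in atTop, t n < z) ∧
      Tendsto (fun n => ν (Ioo (t n) x)) atTop (𝓝 (ν (Iio x))) := by
  subst hE
  obtain ⟨t, ht, htx, ht_lim⟩ := exists_seq_antitone_tendsto_EReal hx.1
  have htE : ∀ n, t n ∈ {x : ℝ | -M < (x : EReal) ∧ (x : EReal) < N} := fun n =>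
    ⟨(htx n).1, (EReal.coe_lt_coe_iff.2 (htx n).2).trans hx.2⟩
  exact ⟨t, fun n => ⟨htE n, (htx n).2⟩, fun z hz => ht_lim z hz.1, tendsto_measure_Ioo_Iio
    (ordConnected_setOf_EReal _ _) hνE hx ht htE fun z hz => ht_lim z hz.1⟩

lemma exists_seq_tendsto_measure_Ioi {M N : EReal} {E : Set ℝ}
    (hE : E = {x : ℝ | -M < (x : EReal) ∧ (x : EReal) < N}) {ν : Measure ℝ}
    (hνE : ∀ᵐ z ∂ν, z ∈ E) {y : ℝ} (hy : y ∈ E) :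
    ∃ s : ℕ → ℝ, (∀ n, s n ∈ E ∧ y < s n) ∧ (∀ z ∈ E, ∀ᶠ n in atTop, z < s n) ∧
      Tendsto (fun n => ν (Ioo y (s n))) atTop (𝓝 (ν (Ioi y))) := by
  subst hE
  obtain ⟨s, hs, hsy, hs_lim⟩ := exists_seq_monotone_tendsto_EReal hy.2
  have hsE : ∀ n, s n ∈ {x : ℝ | -M < (x : EReal) ∧ (x : EReal) < N} := fun n =>
    ⟨hy.1.trans (EReal.coe_lt_coe_iff.2 (hsy n).1), (hsy n).2⟩
  exact ⟨s, fun n => ⟨hsE n, (hsy n).1⟩, fun z hz => hs_lim z hz.2, tendsto_measure_Ioo_Ioi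
    (ordConnected_setOf_EReal _ _) hνE hy hs hsE fun z hz => hs_lim z hz.2⟩

lemma ofReal_sq_le_liminf {r g : ℕ → ℝ} {ρ : ℝ} (hr : Tendsto r atTop (𝓝 ρ)) (hρ : 0 ≤ ρ)
    (hg : ∀ n, 0 ≤ g n) (hrg : ∀ᶠ n in atTop, r n ≤ g n) :
    ENNReal.ofReal (ρ ^ 2) ≤ liminf (fun n => ENNReal.ofReal (g n ^ 2)) atTop := by
  have hlim : Tendsto (fun n => ENNReal.ofReal (max (r n) 0 ^ 2)) atTop
      (𝓝 (ENNReal.ofReal (ρ ^ 2))) := by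
    have h := ENNReal.tendsto_ofReal ((hr.max (tendsto_const_nhds (x := (0 : ℝ)))).pow 2)
    rwa [max_eq_left hρ] at h
  rw [← hlim.liminf_eq]
  refine liminf_le_liminf (hrg.mono fun n hn => ENNReal.ofReal_le_ofReal ?_)
  exact pow_le_pow_left₀ (le_max_right _ _) (max_le hn (hg n)) 2

/-- With `B = ⊤` the ratio `a.toReal / B.toReal` is `0`, matching the convention in `κ̄`. -/
lemma ofReal_sq_le_liminf_of_ratio_le {a B : ℝ≥0∞} {b : ℕ → ℝ≥0∞} {δ g : ℕ → ℝ}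
    (ha : a ≠ ⊤) (hab : a ≤ B) (hb0 : B ≠ 0) (hb : Tendsto b atTop (𝓝 B))
    (hδ : Tendsto δ atTop (𝓝 0)) (hg : ∀ n, 0 ≤ g n)
    (hbound : ∀ᶠ n in atTop, 1 - a.toReal / (b n).toReal / (1 - 2 * δ n) ≤ g n) :
    ENNReal.ofReal ((1 - a.toReal / B.toReal) ^ 2)
      ≤ liminf (fun n => ENNReal.ofReal (g n ^ 2)) atTop := by
  simp only [← ENNReal.toReal_div] at hbound ⊢
  refine ofReal_sq_le_liminf ?_ ?_ hg hbound
  · have hratio : Tendsto (fun n => (a / b n).toReal) atTop (𝓝 (a / B).toReal) :=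
      (ENNReal.tendsto_toReal (ENNReal.div_ne_top ha hb0)).comp
        (ENNReal.Tendsto.div tendsto_const_nhds (Or.inr hb0) hb (Or.inr ha))
    have hden : Tendsto (fun n => 1 - 2 * δ n) atTop (𝓝 1) := by
      simpa using tendsto_const_nhds.sub (hδ.const_mul 2)
    simpa using tendsto_const_nhds.sub (hratio.div hden one_ne_zero)
  · have : a / B ≤ 1 := ENNReal.div_le_of_le_mul (by rwa [one_mul])
    linarith [ENNReal.toReal_le_of_le_ofReal zero_le_one (this.trans ENNReal.ofReal_one.ge)]

lemma tendsto_ofReal_inv_mul_inv_add_inv {δ : ℕ → ℝ} {A B : ℕ → ℝ≥0∞} {a b : ℝ≥0∞}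
    (hδ : Tendsto δ atTop (𝓝 0)) (hA : Tendsto A atTop (𝓝 a)) (hB : Tendsto B atTop (𝓝 b)) :
    Tendsto (fun n => ENNReal.ofReal (1 - 2 * δ n)⁻¹ * ((A n)⁻¹ + (B n)⁻¹)) atTop
      (𝓝 (a⁻¹ + b⁻¹)) := by
  have hc : Tendsto (fun n => ENNReal.ofReal (1 - 2 * δ n)⁻¹) atTop (𝓝 1) := by
    simpa using ENNReal.tendsto_ofReal
      ((tendsto_const_nhds.sub (hδ.const_mul 2)).inv₀ (by norm_num : (1 : ℝ) - 2 * 0 ≠ 0))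
  simpa using ENNReal.Tendsto.mul hc (Or.inl one_ne_zero)
    ((tendsto_inv_iff.2 hA).add (tendsto_inv_iff.2 hB)) (Or.inr ENNReal.one_ne_top)

lemma mul_le_of_tendsto_of_le_liminf {c D L : ℝ≥0∞} {P S : ℕ → ℝ≥0∞}
    (hPS : ∀ n, c * P n ≤ S n) (hS : Tendsto S atTop (𝓝 L)) (hD : D ≤ liminf P atTop) :
    c * D ≤ L :=
  calc c * D ≤ liminf (fun _ => c) atTop * liminf P atTop := by rw [liminf_const]; gcongr
    _ ≤ liminf (fun n => c * P n) atTop := ENNReal.le_liminf_mul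
    _ ≤ liminf S atTop := liminf_le_liminf (Eventually.of_forall hPS)
    _ = L := hS.liminf_eq

lemma lambdaDD_mul_lintegral_smoothPlateau_le {E : Set ℝ} {C : ℝ → ℝ} {μ ν : Measure ℝ}
    {δ p x y q : ℝ} (hEo : IsOpen E) (hE : E.OrdConnected) (hC : ContinuousOn C E)
    (hν : ν = (volume.restrict E).withDensity fun z => ENNReal.ofReal (Real.exp (-C z)))
    (hμ : μ (Ioo p q) ≠ ⊤) (hδ : 0 < δ) (hδ' : δ < 1 / 2) (hp : p ∈ E) (hx : x ∈ E)
    (hy : y ∈ E) (hq : q ∈ E) (hpx : p < x) (hxy : x < y) (hyq : y < q) :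
    lambdaDD E (fun z => Real.exp (C z)) μ
        * ∫⁻ z, ENNReal.ofReal (smoothPlateau (fun w => Real.exp (-C w)) δ p x y q z ^ 2) ∂μ
      ≤ ENNReal.ofReal (1 - 2 * δ)⁻¹ * ((ν (Ioo p x))⁻¹ + (ν (Ioo y q))⁻¹) := by
  set W : ℝ → ℝ := fun w => Real.exp (-C w)
  have hWc : ContinuousOn W E := continuousOn_exp_neg hC
  have hW : ∀ z, 0 < W z := fun z => Real.exp_pos _
  have hzero : ∀ z ∉ Ioo p q, smoothPlateau W δ p x y q z = 0 := fun z hz =>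
    smoothPlateau_eq_zero hW hδ hpx hyq hz
  have hsupp : tsupport (smoothPlateau W δ p x y q) ⊆ Icc p q :=
    closure_minimal (fun z hz => Ioo_subset_Icc_self (not_imp_comm.1 (hzero z) hz)) isClosed_Icc
  have hνIoo : ∀ {a b}, a ∈ E → b ∈ E → a < b →
      ν (Ioo a b) = ENNReal.ofReal (∫ w in a..b, W w) :=
    fun ha hb hab => hν ▸ withDensity_Ioo_eq hWc (fun z _ => (hW z).le) hab.le (hE.out ha hb)
  have hfin : ∫⁻ z, ENNReal.ofReal (smoothPlateau W δ p x y q z ^ 2) ∂μ ≠ ⊤ :=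
    ne_top_of_le_ne_top hμ (lintegral_ofReal_sq_le_measure measurableSet_Ioo
      (abs_smoothPlateau_le_one hδ hδ') hzero)
  refine (lambdaDD_mul_le (differentiableOn_smoothPlateau hEo hE hWc hp hq)
    (HasCompactSupport.of_support_subset_isCompact isCompact_Icc (subset_closure.trans hsupp))
    (hsupp.trans (hE.out hp hq)) hfin).trans ((dirichletEnergy_smoothPlateau_le hEo hE hC hδ hδ'
    hp hx hy hq hpx hxy hyq).trans_eq ?_)
  rw [ENNReal.ofReal_div_of_pos (integral_pos_of_pos hE hWc hW hp hx hpx),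
    ENNReal.ofReal_div_of_pos (integral_pos_of_pos hE hWc hW hy hq hyq), ← hνIoo hp hx hpx,
    ← hνIoo hy hq hyq, div_eq_mul_inv, div_eq_mul_inv, mul_add]

/-- The bracket in `κ̄^{DD}`: the `μ`-mass of the square of the limiting test function. -/
noncomputable def plateauMass (μ ν : Measure ℝ) (x y : ℝ) : ℝ≥0∞ :=
  μ (Ioo x y)
    + (∫⁻ z in Iio x, ENNReal.ofReal ((1 - (ν (Ioo z x)).toReal / (ν (Iio x)).toReal) ^ 2) ∂μ)
    + (∫⁻ z in Ioi y, ENNReal.ofReal ((1 - (ν (Ioo y z)).toReal / (ν (Ioi y)).toReal) ^ 2) ∂μ)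

lemma le_liminf_lintegral_smoothPlateau {E : Set ℝ} {C : ℝ → ℝ} {μ ν : Measure ℝ}
    (hEo : IsOpen E) (hE : E.OrdConnected) (hC : ContinuousOn C E)
    (hν : ν = (volume.restrict E).withDensity fun z => ENNReal.ofReal (Real.exp (-C z)))
    (hμ : μ ≪ volume.restrict E) {x y : ℝ} (hx : x ∈ E) (hy : y ∈ E) (hxy : x < y)
    {δ t s : ℕ → ℝ} (hδ : ∀ n, 0 < δ n ∧ δ n < 1 / 2) (hδlim : Tendsto δ atTop (𝓝 0))
    (ht : ∀ n, t n ∈ E ∧ t n < x) (ht_lim : ∀ z ∈ E, ∀ᶠ n in atTop, t n < z)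
    (hνt : Tendsto (fun n => ν (Ioo (t n) x)) atTop (𝓝 (ν (Iio x)))) (hνx : ν (Iio x) ≠ 0)
    (hs : ∀ n, s n ∈ E ∧ y < s n) (hs_lim : ∀ z ∈ E, ∀ᶠ n in atTop, z < s n)
    (hνs : Tendsto (fun n => ν (Ioo y (s n))) atTop (𝓝 (ν (Ioi y)))) (hνy : ν (Ioi y) ≠ 0) :
    plateauMass μ ν x y ≤ liminf (fun n => ∫⁻ z, ENNReal.ofReal
          (smoothPlateau (fun w => Real.exp (-C w)) (δ n) (t n) x y (s n) z ^ 2) ∂μ) atTop := by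
  set W : ℝ → ℝ := fun w => Real.exp (-C w)
  have hWc : ContinuousOn W E := continuousOn_exp_neg hC
  have hW : ∀ z, 0 < W z := fun z => Real.exp_pos _
  have hνIoo : ∀ {a b}, a ∈ E → b ∈ E → a ≤ b →
      ν (Ioo a b) = ENNReal.ofReal (∫ w in a..b, W w) :=
    fun ha hb hab => hν ▸ withDensity_Ioo_eq hWc (fun z _ => (hW z).le) hab (hE.out ha hb)
  have hνIoo_toReal : ∀ {a b}, a ∈ E → b ∈ E → a ≤ b →
      (ν (Ioo a b)).toReal = ∫ w in a..b, W w :=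
    fun ha hb hab => by rw [hνIoo ha hb hab, ENNReal.toReal_ofReal (integral_nonneg_of_pos hW hab)]
  refine le_liminf_lintegral_of_le_liminf (hμ.ae_le (ae_restrict_mem hEo.measurableSet))
    (fun n => ((ENNReal.continuous_ofReal.comp_continuousOn
      (((differentiableOn_smoothPlateau hEo hE hWc (ht n).1 (hs n).1).continuousOn).pow 2)
        ).aemeasurable hEo.measurableSet).mono_ac hμ)
    hxy.le (fun z hz => ?_) (fun z hz hzx => ?_) (fun z hz hyz => ?_)
  · simp [smoothPlateau_eq_one hE hWc hW (hδ _).1 (hδ _).2 (ht _).1 hx hy (hs _).1 (ht _).2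
      (hs _).2 (Ioo_subset_Icc_self hz)]
  · refine ofReal_sq_le_liminf_of_ratio_le
      (by rw [hνIoo hz hx hzx.le]; exact ENNReal.ofReal_ne_top)
      (measure_mono Ioo_subset_Iio_self) hνx hνt hδlim
      (fun n => smoothPlateau_nonneg (hδ n).1 (hδ n).2 z) ?_
    filter_upwards [ht_lim z hz] with n hn
    rw [hνIoo_toReal hz hx hzx.le, hνIoo_toReal (ht n).1 hx (ht n).2.le,
      smoothPlateau_of_le_left hE hWc hW (hδ n).1 (hδ n).2 hy (hs n).1 hxy (hs n).2 hz hzx.le]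
    exact one_sub_div_le_ramp_normalizedScale hE hWc hW (hδ n).1 (hδ n).2 (ht n).1 hx (ht n).2.ne
      (by rw [uIcc_of_le (ht n).2.le]; exact ⟨hn.le, hzx.le⟩)
  · refine ofReal_sq_le_liminf_of_ratio_le
      (by rw [hνIoo hy hz hyz.le]; exact ENNReal.ofReal_ne_top)
      (measure_mono Ioo_subset_Ioi_self) hνy hνs hδlim
      (fun n => smoothPlateau_nonneg (hδ n).1 (hδ n).2 z) ?_
    filter_upwards [hs_lim z hz] with n hn
    rw [hνIoo_toReal hy hz hyz.le, hνIoo_toReal hy (hs n).1 (hs n).2.le, integral_symm z y,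
      integral_symm (s n) y, neg_div_neg_eq,
      smoothPlateau_of_ge_right hE hWc hW (hδ n).1 (hδ n).2 (ht n).1 hx (ht n).2 hxy hz hyz.le]
    exact one_sub_div_le_ramp_normalizedScale hE hWc hW (hδ n).1 (hδ n).2 (hs n).1 hy (hs n).2.ne'
      (by rw [uIcc_of_ge (hs n).2.le]; exact ⟨hyz.le, hn.le⟩)

theorem lambdaDD_le_of_lt {M N : EReal} {E : Set ℝ}
    (hE : E = {x : ℝ | -M < (x : EReal) ∧ (x : EReal) < N}) {C ρ : ℝ → ℝ}
    (hC : ContinuousOn C E) (hρ : ContinuousOn ρ E) (hρpos : ∀ z ∈ E, 0 < ρ z)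
    {μ ν : Measure ℝ}
    (hμ : μ = (volume.restrict E).withDensity fun z => ENNReal.ofReal (ρ z))
    (hν : ν = (volume.restrict E).withDensity fun z => ENNReal.ofReal (Real.exp (-C z)))
    {x y : ℝ} (hx : x ∈ E) (hy : y ∈ E) (hxy : x < y) :
    lambdaDD E (fun z => Real.exp (C z)) μ
      ≤ ((ν (Iio x))⁻¹ + (ν (Ici y))⁻¹) * (plateauMass μ ν x y)⁻¹ := by
  have hEo : IsOpen E := hE ▸ isOpen_setOf_EReal _ _
  have hEc : E.OrdConnected := hE ▸ ordConnected_setOf_EReal _ _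
  have hνpos : ∀ {a b}, a ∈ E → b ∈ E → a < b → ν (Ioo a b) ≠ 0 := fun ha hb hab =>
    (hν ▸ withDensity_Ioo_pos (continuousOn_exp_neg hC) (fun z _ => Real.exp_pos _) hab
      (hEc.out ha hb)).ne'
  obtain ⟨t, ht, ht_lim, hνt⟩ :=
    exists_seq_tendsto_measure_Iio hE (hν ▸ ae_mem_withDensity hEo.measurableSet _) hx
  obtain ⟨s, hs, hs_lim, hνs⟩ :=
    exists_seq_tendsto_measure_Ioi hE (hν ▸ ae_mem_withDensity hEo.measurableSet _) hy
  have hνx : ν (Iio x) ≠ 0 := fun h =>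
    hνpos (ht 0).1 hx (ht 0).2 (measure_mono_null Ioo_subset_Iio_self h)
  have hνy : ν (Ioi y) ≠ 0 := fun h =>
    hνpos hy (hs 0).1 (hs 0).2 (measure_mono_null Ioo_subset_Ioi_self h)
  set δ : ℕ → ℝ := fun n => ((n : ℝ) + 3)⁻¹
  have hδ : ∀ n, 0 < δ n ∧ δ n < 1 / 2 := fun n => ⟨by positivity, by
    rw [one_div]; exact inv_strictAnti₀ two_pos (by linarith [n.cast_nonneg (α := ℝ)])⟩
  have hδlim : Tendsto δ atTop (𝓝 0) :=
    tendsto_inv_atTop_zero.comp (tendsto_atTop_add_const_right _ 3 tendsto_natCast_atTop_atTop)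
  have hμfin : ∀ n, μ (Ioo (t n) (s n)) ≠ ⊤ := fun n => by
    rw [hμ, withDensity_Ioo_eq hρ (fun z hz => (hρpos z hz).le)
      ((ht n).2.trans (hxy.trans (hs n).2)).le (hEc.out (ht n).1 (hs n).1)]
    exact ENNReal.ofReal_ne_top
  have hmass : plateauMass μ ν x y ≠ 0 :=
    ((hμ ▸ withDensity_Ioo_pos hρ hρpos hxy (hEc.out hx hy)).trans_le
      (le_self_add.trans le_self_add)).ne'
  have hIci : ν (Ici y) = ν (Ioi y) := by rw [hν]; exact (measure_congr Ioi_ae_eq_Ici).symm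
  rw [hIci, ← div_eq_mul_inv,
    ENNReal.le_div_iff_mul_le (Or.inl hmass)
      (Or.inr (ENNReal.add_ne_top.2 ⟨ENNReal.inv_ne_top.2 hνx, ENNReal.inv_ne_top.2 hνy⟩))]
  exact mul_le_of_tendsto_of_le_liminf
    (fun n => lambdaDD_mul_lintegral_smoothPlateau_le hEo hEc hC hν
    (hμfin n) (hδ n).1 (hδ n).2 (ht n).1 hx hy (hs n).1 (ht n).2 hxy (hs n).2)
    (tendsto_ofReal_inv_mul_inv_add_inv hδlim hνt hνs)
    (le_liminf_lintegral_smoothPlateau hEo hEc hC hν (hμ ▸ withDensity_absolutelyContinuous _ _)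
      hx hy hxy hδ hδlim ht ht_lim hνt hνx hs hs_lim hνs hνy)

theorem improved_upper_bound_DD_general
    (M N : EReal)
    (E : Set ℝ) (hE : E = {x : ℝ | -M < (x : EReal) ∧ (x : EReal) < N})
    (a b : ℝ → ℝ)
    (ha : ContinuousOn a E) (hb : ContinuousOn b E)
    (hapos : ∀ x ∈ E, 0 < a x)
    (θ₀ : ℝ) (hθ₀ : θ₀ ∈ E)
    (C : ℝ → ℝ) (hC : ∀ x, C x = ∫ t in θ₀..x, b t / a t)
    (μ ν : Measure ℝ)
    (hμ : μ = (volume.restrict E).withDensity fun x => ENNReal.ofReal (Real.exp (C x) / a x))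
    (hν : ν = (volume.restrict E).withDensity fun x => ENNReal.ofReal (Real.exp (-C x)))
    (lam : ℝ≥0∞)
    -- λ^DD : infimum of D(f) over absolutely continuous f with compact support in E,
    -- ∫ f² dμ = 1
    (hlam : lam = ⨅ (f : ℝ → ℝ) (_ : DifferentiableOn ℝ f E) (_ : HasCompactSupport f)
        (_ : tsupport f ⊆ E) (_ : ∫⁻ x, ENNReal.ofReal ((f x) ^ 2) ∂μ = 1),
        ∫⁻ x in E, ENNReal.ofReal ((deriv f x) ^ 2 * Real.exp (C x)))
    (kapInv : ℝ≥0∞)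
    -- (κ^DD)⁻¹ = inf_{x<y} [ν((-M,x))⁻¹ + ν((y,N))⁻¹] μ((x,y))⁻¹
    (hkap : kapInv = ⨅ (x : ℝ) (_ : x ∈ E) (y : ℝ) (_ : y ∈ E) (_ : x < y),
        ((ν (Iio x))⁻¹ + (ν (Ioi y))⁻¹) * (μ (Ioo x y))⁻¹)
    (kbarInv : ℝ≥0∞)
    -- (κ̄^DD)⁻¹ = inf_{-M<x<y<N} (ν((-M,x))⁻¹ + ν([y,N))⁻¹) ⋅
    --   { μ((x,y)) + ∫_{(-M,x)} [1 - ν((z,x))/ν((-M,x))]² μ(dz)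
    --             + ∫_{(y,N)} [1 - ν((y,z))/ν((y,N))]² μ(dz) }⁻¹
    -- (ratios with infinite denominator are 0, via ENNReal.toReal)
    (hkbar : kbarInv = ⨅ (x : ℝ) (_ : x ∈ E) (y : ℝ) (_ : y ∈ E) (_ : x < y),
        ((ν (Iio x))⁻¹ + (ν (Ici y))⁻¹) *
        (μ (Ioo x y)
          + (∫⁻ z in Iio x, ENNReal.ofReal ((1 - (ν (Ioo z x)).toReal / (ν (Iio x)).toReal) ^ 2) ∂μ)
          + (∫⁻ z in Ioi y, ENNReal.ofReal ((1 - (ν (Ioo y z)).toReal / (ν (Ioi y)).toReal) ^ 2) ∂μ))⁻¹) :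
    lam ≤ kbarInv ∧ kbarInv ≤ kapInv := by
  have hEo : IsOpen E := hE ▸ isOpen_setOf_EReal _ _
  have hEc : E.OrdConnected := hE ▸ ordConnected_setOf_EReal _ _
  have hCc : ContinuousOn C E := by
    rw [funext hC]
    exact fun z hz => (hasDerivAt_integral_of_mem hEo hEc
      (hb.div ha fun z hz => (hapos z hz).ne') hθ₀ hz).continuousAt.continuousWithinAt
  refine ⟨?_, ?_⟩
  · rw [hlam, hkbar]
    exact le_iInf₂ fun x hx => le_iInf₂ fun y hy => le_iInf fun hxy => lambdaDD_le_of_lt hE hCc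
      ((Real.continuous_exp.comp_continuousOn hCc).div ha fun z hz => (hapos z hz).ne')
      (fun z hz => div_pos (Real.exp_pos _) (hapos z hz)) hμ hν hx hy hxy
  · rw [hkbar, hkap]
    gcongr with x _ y _ _
    · exact Ioi_subset_Ici_self
    · exact le_self_add.trans le_self_add

/-- Improved upper bound, DD-case (Proposition 3.2):
`λ^DD ≤ (κ̄^DD)⁻¹ ≤ (κ^DD)⁻¹`. -/
theorem improved_upper_bound_DD
    (M N : EReal) (hM : 0 < M) (hN : 0 < N)
    (E : Set ℝ) (hE : E = {x : ℝ | -M < (x : EReal) ∧ (x : EReal) < N})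
    (a b : ℝ → ℝ)
    (ha : ContinuousOn a E) (hb : ContinuousOn b E)
    (hapos : ∀ x ∈ E, 0 < a x)
    (θ₀ : ℝ) (hθ₀ : θ₀ ∈ E)
    (C : ℝ → ℝ) (hC : ∀ x, C x = ∫ t in θ₀..x, b t / a t)
    (μ ν : Measure ℝ)
    (hμ : μ = (volume.restrict E).withDensity fun x => ENNReal.ofReal (Real.exp (C x) / a x))
    (hν : ν = (volume.restrict E).withDensity fun x => ENNReal.ofReal (Real.exp (-C x)))
    -- μ and ν are locally finite on E
    (hμloc : ∀ x ∈ E, ∃ s ∈ nhds x, μ s < ⊤)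
    (hνloc : ∀ x ∈ E, ∃ s ∈ nhds x, ν s < ⊤)
    (lam : ℝ≥0∞)
    -- λ^DD : infimum of D(f) over absolutely continuous f with compact support in E,
    -- ∫ f² dμ = 1
    (hlam : lam = ⨅ (f : ℝ → ℝ) (_ : DifferentiableOn ℝ f E) (_ : HasCompactSupport f)
        (_ : tsupport f ⊆ E) (_ : ∫⁻ x, ENNReal.ofReal ((f x) ^ 2) ∂μ = 1),
        ∫⁻ x in E, ENNReal.ofReal ((deriv f x) ^ 2 * Real.exp (C x)))
    (kapInv : ℝ≥0∞)
    -- (κ^DD)⁻¹ = inf_{x<y} [ν((-M,x))⁻¹ + ν((y,N))⁻¹] μ((x,y))⁻¹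
    (hkap : kapInv = ⨅ (x : ℝ) (_ : x ∈ E) (y : ℝ) (_ : y ∈ E) (_ : x < y),
        ((ν (Iio x))⁻¹ + (ν (Ioi y))⁻¹) * (μ (Ioo x y))⁻¹)
    (kbarInv : ℝ≥0∞)
    -- (κ̄^DD)⁻¹ = inf_{-M<x<y<N} (ν((-M,x))⁻¹ + ν([y,N))⁻¹) ⋅
    --   { μ((x,y)) + ∫_{(-M,x)} [1 - ν((z,x))/ν((-M,x))]² μ(dz)
    --             + ∫_{(y,N)} [1 - ν((y,z))/ν((y,N))]² μ(dz) }⁻¹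
    -- (ratios with infinite denominator are 0, via ENNReal.toReal)
    (hkbar : kbarInv = ⨅ (x : ℝ) (_ : x ∈ E) (y : ℝ) (_ : y ∈ E) (_ : x < y),
        ((ν (Iio x))⁻¹ + (ν (Ici y))⁻¹) *
        (μ (Ioo x y)
          + (∫⁻ z in Iio x, ENNReal.ofReal ((1 - (ν (Ioo z x)).toReal / (ν (Iio x)).toReal) ^ 2) ∂μ)
          + (∫⁻ z in Ioi y, ENNReal.ofReal ((1 - (ν (Ioo y z)).toReal / (ν (Ioi y)).toReal) ^ 2) ∂μ))⁻¹) :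
    lam ≤ kbarInv ∧ kbarInv ≤ kapInv :=
  improved_upper_bound_DD_general M N E hE a b ha hb hapos θ₀ hθ₀ C hC μ ν hμ hν lam hlam kapInv
    hkap kbarInv hkbar
end

section
/- Variational lower bound, DD-case (Theorem 3.3, '≥' direction): Assume ν(E) < ∞. Let f be continuous and strictly positive on E, let u ∈ E, and define h⁻(z) = ∫_{−M}^z e^{−C(x)} ( ∫_x^u e^{C(t)} f(t)/a(t) dt ) dx for z ≤ u and h⁺(z) = ∫_z^N e^{−C(x)} ( ∫_u^x e^{C(t)} f(t)/a(t) dt ) dx for z > u. If h⁻ and h⁺ are finite and h⁻(u) = h⁺(u), then λ^{DD} ≥ min( inf_{z ∈ (−M,u)} f(z)/h⁻(z), inf_{z ∈ (u,N)} f(z)/h⁺(z) ), where λ^{DD} = inf{ D(g) : g absolutely continuous with compact support in E, ∫_E g² dμ = 1 }. -/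
/-!
Put `ψ x = ∫_x^u e^C f / a` and `W = e^{-C} ψ`. Then `h⁻ z = ∫_{E ∩ (-∞, z)} W` and
`h⁺ z = -∫_{E ∩ (z, ∞)} W`, so `h⁻ - h⁺ = ∫_E W` is constant and `h⁻(u) = h⁺(u)` makes
`h⁻ = h⁺ =: h`. Since `W` is positive left of `u` and negative right of it, `h > 0` on `E`, and
`e^C h' = ψ` gives `(e^C h')' = -(e^C / a) f`. If `c h ≤ f`, Picone's identity for
`F = g² e^C h' / h`, which vanishes at the ends of an interval containing the support of `g`,
gives `F' ≤ g'² e^C - c g² e^C / a`; integrating yields `c ∫ g² dμ ≤ D(g)`.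
-/

open MeasureTheory Set Filter Topology
open scoped ENNReal NNReal

namespace Set.OrdConnected

variable {s : Set ℝ} {f : ℝ → ℝ}

theorem hasDerivAt_intervalIntegral (hs : s.OrdConnected) (hso : IsOpen s)
    (hf : ContinuousOn f s) {a z : ℝ} (ha : a ∈ s) (hz : z ∈ s) :
    HasDerivAt (fun y => ∫ x in a..y, f x) (f z) z :=
  intervalIntegral.integral_hasDerivAt_right (hf.mono (hs.uIcc_subset ha hz)).intervalIntegrable
    (hf.stronglyMeasurableAtFilter hso z hz) (hf.continuousAt (hso.mem_nhds hz))

theorem hasDerivAt_intervalIntegral_left (hs : s.OrdConnected) (hso : IsOpen s)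
    (hf : ContinuousOn f s) {b z : ℝ} (hb : b ∈ s) (hz : z ∈ s) :
    HasDerivAt (fun y => ∫ x in y..b, f x) (-f z) z :=
  intervalIntegral.integral_hasDerivAt_left (hf.mono (hs.uIcc_subset hz hb)).intervalIntegrable
    (hf.stronglyMeasurableAtFilter hso z hz) (hf.continuousAt (hso.mem_nhds hz))

theorem setIntegral_inter_Iio_eq_add (hs : s.OrdConnected)
    (hf : IntegrableOn f s) {a b : ℝ} (ha : a ∈ s) (hb : b ∈ s) :
    ∫ x in s ∩ Iio b, f x = (∫ x in s ∩ Iio a, f x) + ∫ x in a..b, f x := by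
  wlog hab : a ≤ b generalizing a b
  · have := this hb ha (le_of_not_ge hab)
    rw [intervalIntegral.integral_symm] at this
    linarith
  have hIco : Ico a b ⊆ s := Ico_subset_Icc_self.trans (hs.out ha hb)
  rw [← Iio_union_Ico_eq_Iio hab, inter_union_distrib_left, inter_eq_right.2 hIco,
    setIntegral_union (Iio_disjoint_Ici le_rfl |>.mono inter_subset_right Ico_subset_Ici_self)
      measurableSet_Ico (hf.mono_set inter_subset_left) (hf.mono_set hIco),
    intervalIntegral.integral_of_le hab, integral_Ico_eq_integral_Ioc]

theorem hasDerivAt_setIntegral_inter_Iio (hs : s.OrdConnected) (hso : IsOpen s)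
    (hf : IntegrableOn f s) (hfc : ContinuousOn f s) {z : ℝ} (hz : z ∈ s) :
    HasDerivAt (fun y => ∫ x in s ∩ Iio y, f x) (f z) z := by
  refine ((hs.hasDerivAt_intervalIntegral hso hfc hz hz).const_add
    (∫ x in s ∩ Iio z, f x)).congr_of_eventuallyEq ?_
  filter_upwards [hso.mem_nhds hz] with y hy
  exact hs.setIntegral_inter_Iio_eq_add hf hz hy

theorem intervalIntegral_pos (hs : s.OrdConnected) (hf : ContinuousOn f s)
    (hpos : ∀ x ∈ s, 0 < f x) {x y : ℝ} (hx : x ∈ s) (hy : y ∈ s) (hxy : x < y) :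
    0 < ∫ t in x..y, f t :=
  intervalIntegral.intervalIntegral_pos_of_pos_on
    (hf.mono (hs.uIcc_subset hx hy)).intervalIntegrable
    (fun t ht => hpos t (hs.out hx hy (Ioo_subset_Icc_self ht))) hxy

end Set.OrdConnected

theorem setIntegral_inter_Iio_add_inter_Ioi {s : Set ℝ} {f : ℝ → ℝ} (hf : IntegrableOn f s)
    (z : ℝ) : (∫ x in s ∩ Iio z, f x) + ∫ x in s ∩ Ioi z, f x = ∫ x in s, f x := by
  rw [← integral_inter_add_sdiff measurableSet_Iio hf, sdiff_eq, compl_Iio]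
  congr 1
  exact setIntegral_congr_set ((ae_eq_refl s).inter (Ioi_ae_eq_Ici (μ := volume)))

theorem IsOpen.setIntegral_pos {s : Set ℝ} {f : ℝ → ℝ} (hs : IsOpen s) (hne : s.Nonempty)
    (hf : IntegrableOn f s) (hpos : ∀ x ∈ s, 0 < f x) : 0 < ∫ x in s, f x := by
  rw [setIntegral_pos_iff_support_of_nonneg_ae
    (ae_restrict_of_forall_mem hs.measurableSet fun x hx => (hpos x hx).le) hf]
  have hsupp : Function.support f ∩ s = s := inter_eq_right.2 fun x hx => (hpos x hx).ne'
  rw [hsupp]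
  exact hs.measure_pos volume hne

theorem IsOpen.nonempty_inter_Iio {s : Set ℝ} (hs : IsOpen s) {z : ℝ} (hz : z ∈ s) :
    (s ∩ Iio z).Nonempty :=
  Filter.nonempty_of_mem (inter_mem (mem_nhdsWithin_of_mem_nhds (hs.mem_nhds hz))
    (self_mem_nhdsWithin (s := Iio z)))

theorem IsOpen.nonempty_inter_Ioi {s : Set ℝ} (hs : IsOpen s) {z : ℝ} (hz : z ∈ s) :
    (s ∩ Ioi z).Nonempty :=
  Filter.nonempty_of_mem (inter_mem (mem_nhdsWithin_of_mem_nhds (hs.mem_nhds hz))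
    (self_mem_nhdsWithin (s := Ioi z)))

theorem IsOpen.exists_Icc_subset_of_isCompact {s K : Set ℝ} (hs : IsOpen s)
    (hsc : s.OrdConnected) (hne : s.Nonempty) (hK : IsCompact K) (hKs : K ⊆ s) :
    ∃ α β, α ≤ β ∧ Icc α β ⊆ s ∧ K ⊆ Ioo α β := by
  -- a point of `s` is added so that `sInf` and `sSup` are taken of a nonempty set
  obtain ⟨u, hu⟩ := hne
  set L := insert u K
  have hL : IsCompact L := hK.insert u
  have hLs : L ⊆ s := insert_subset hu hKs
  obtain ⟨α, hαs, hα⟩ := hs.nonempty_inter_Iio (hLs (hL.sInf_mem (insert_nonempty u K)))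
  obtain ⟨β, hβs, hβ⟩ := hs.nonempty_inter_Ioi (hLs (hL.sSup_mem (insert_nonempty u K)))
  have hLαβ : L ⊆ Ioo α β := fun x hx =>
    ⟨hα.trans_le (csInf_le hL.bddBelow hx), (le_csSup hL.bddAbove hx).trans_lt hβ⟩
  exact ⟨α, β, (hLαβ (mem_insert u K)).1.le.trans (hLαβ (mem_insert u K)).2.le,
    hsc.out hαs hβs, (subset_insert u K).trans hLαβ⟩

theorem ContinuousOn.le_of_forall_ne {s : Set ℝ} (hs : IsOpen s) {F G : ℝ → ℝ}
    (hF : ContinuousOn F s) (hG : ContinuousOn G s) {u : ℝ} (hu : u ∈ s)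
    (hle : ∀ x ∈ s, x ≠ u → F x ≤ G x) : F u ≤ G u :=
  le_of_tendsto_of_tendsto (b := 𝓝[≠] u)
    ((hF.continuousAt (hs.mem_nhds hu)).tendsto.mono_left nhdsWithin_le_nhds)
    ((hG.continuousAt (hs.mem_nhds hu)).tendsto.mono_left nhdsWithin_le_nhds)
    (eventually_nhdsWithin_iff.2 (mem_of_superset (hs.mem_nhds hu) fun x hx hxu => hle x hx hxu))

theorem EReal.isOpen_and_ordConnected_preimage_Ioo (a b : EReal) :
    IsOpen (Real.toEReal ⁻¹' Ioo a b) ∧ (Real.toEReal ⁻¹' Ioo a b).OrdConnected :=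
  ⟨isOpen_Ioo.preimage continuous_coe_real_ereal,
    ordConnected_Ioo.preimage_mono EReal.coe_strictMono.monotone⟩

theorem ofReal_intervalIntegral_eq_setLIntegral_Ioc {α β : ℝ} (hαβ : α ≤ β) {f : ℝ → ℝ}
    (hf : IntegrableOn f (Icc α β)) (hf0 : ∀ x ∈ Ioc α β, 0 ≤ f x) :
    ENNReal.ofReal (∫ x in α..β, f x) = ∫⁻ x in Ioc α β, ENNReal.ofReal (f x) := by
  rw [intervalIntegral.integral_of_le hαβ]
  exact ofReal_integral_eq_lintegral_ofReal (hf.mono_set Ioc_subset_Icc_self)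
    (ae_restrict_of_forall_mem measurableSet_Ioc hf0)

theorem picone_le {g g' h h' e : ℝ} (hh : 0 < h) (he : 0 ≤ e) :
    (2 * g * g' * h - g ^ 2 * h') / h ^ 2 * (e * h') ≤ g' ^ 2 * e := by
  have key : (2 * g * g' * h - g ^ 2 * h') / h ^ 2 * (e * h')
      = g' ^ 2 * e - e * (g' - g * h' / h) ^ 2 := by
    field_simp
    ring
  rw [key]
  nlinarith [mul_nonneg he (sq_nonneg (g' - g * h' / h))]

theorem integral_sq_mul_le_integral_deriv_sq_mul {α β : ℝ} (hαβ : α ≤ β)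
    {g g' h h' e p q V : ℝ → ℝ}
    (hg : ∀ x ∈ Icc α β, HasDerivAt g (g' x) x) (hh : ∀ x ∈ Icc α β, HasDerivAt h (h' x) x)
    (hp : ∀ x ∈ Icc α β, HasDerivAt p (-q x) x) (hpe : ∀ x ∈ Icc α β, p x = e x * h' x)
    (hpos : ∀ x ∈ Icc α β, 0 < h x) (he : ∀ x ∈ Icc α β, 0 ≤ e x)
    (hV : ∀ x ∈ Icc α β, V x * h x ≤ q x) (hgα : g α = 0) (hgβ : g β = 0)
    (hgV : IntegrableOn (fun x => g x ^ 2 * V x) (Icc α β))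
    (hg'e : IntegrableOn (fun x => g' x ^ 2 * e x) (Icc α β)) :
    ∫ x in α..β, g x ^ 2 * V x ≤ ∫ x in α..β, g' x ^ 2 * e x := by
  set F : ℝ → ℝ := fun y => g y ^ 2 / h y * p y
  have hF : ∀ x ∈ Icc α β, HasDerivAt F
      ((2 * g x * g' x * h x - g x ^ 2 * h' x) / h x ^ 2 * p x + g x ^ 2 / h x * -q x) x := by
    intro x hx
    have hg2 : HasDerivAt (fun y => g y ^ 2) (2 * g x * g' x) x := by
      simpa [mul_comm] using (hg x hx).fun_pow 2
    exact ((hg2.fun_div (hh x hx) (hpos x hx).ne').fun_mul (hp x hx)).congr_deriv (by ring)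
  have hF' : ∀ x ∈ Ioo α β, (2 * g x * g' x * h x - g x ^ 2 * h' x) / h x ^ 2 * p x
      + g x ^ 2 / h x * -q x ≤ g' x ^ 2 * e x - g x ^ 2 * V x := by
    intro x hx
    have hx := Ioo_subset_Icc_self hx
    rw [hpe x hx]
    have hq : g x ^ 2 * V x ≤ g x ^ 2 / h x * q x := by
      rw [div_mul_eq_mul_div, le_div_iff₀ (hpos x hx), mul_assoc]
      exact mul_le_mul_of_nonneg_left (hV x hx) (sq_nonneg _)
    linarith [picone_le (g := g x) (g' := g' x) (h' := h' x) (hpos x hx) (he x hx)]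
  have hFTC := intervalIntegral.sub_le_integral_of_hasDeriv_right_of_le
    (φ := fun x => g' x ^ 2 * e x - g x ^ 2 * V x) hαβ
    (fun x hx => (hF x hx).continuousAt.continuousWithinAt)
    (fun x hx => (hF x (Ioo_subset_Icc_self hx)).hasDerivWithinAt) (hg'e.sub hgV) hF'
  have hFα : F α = 0 := by simp [F, hgα]
  have hFβ : F β = 0 := by simp [F, hgβ]
  rw [hFα, hFβ, sub_zero, intervalIntegral.integral_sub
    ((intervalIntegrable_iff_integrableOn_Icc_of_le hαβ).2 hg'e)
    ((intervalIntegrable_iff_integrableOn_Icc_of_le hαβ).2 hgV)] at hFTC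
  linarith

theorem mul_le_of_le_min_iInf_ofReal_div {s : Set ℝ} (hs : IsOpen s) {f h : ℝ → ℝ}
    (hf : ContinuousOn f s) (hh : ContinuousOn h s) (hf0 : ∀ x ∈ s, 0 ≤ f x)
    (hpos : ∀ x ∈ s, 0 < h x) {u : ℝ} (hu : u ∈ s) {c : ℝ≥0}
    (hc : (c : ℝ≥0∞) ≤ min (⨅ z ∈ s ∩ Iio u, ENNReal.ofReal (f z / h z))
      (⨅ z ∈ s ∩ Ioi u, ENNReal.ofReal (f z / h z))) :
    ∀ x ∈ s, c * h x ≤ f x := by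
  have hne : ∀ x ∈ s, x ≠ u → c * h x ≤ f x := by
    intro x hx hxu
    have hcx : (c : ℝ≥0∞) ≤ ENNReal.ofReal (f x / h x) := by
      rcases hxu.lt_or_gt with hxu | hxu
      exacts [hc.trans <| (min_le_left _ _).trans (iInf₂_le x ⟨hx, hxu⟩),
        hc.trans <| (min_le_right _ _).trans (iInf₂_le x ⟨hx, hxu⟩)]
    rw [← le_div_iff₀ (hpos x hx)]
    exact ENNReal.toReal_le_of_le_ofReal (div_nonneg (hf0 x hx) (hpos x hx).le) hcx
  intro x hx
  obtain rfl | hxu := eq_or_ne x u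
  · exact (continuousOn_const.mul hh).le_of_forall_ne hs hf hx hne
  · exact hne x hx hxu

theorem coe_mul_lintegral_sq_le_lintegral_deriv_sq_mul {E : Set ℝ} (hEo : IsOpen E)
    (hEc : E.OrdConnected) (hne : E.Nonempty) {ρ e f h h' p : ℝ → ℝ} {c : ℝ≥0}
    (hρ : ContinuousOn ρ E) (hρ0 : ∀ x ∈ E, 0 ≤ ρ x) (he : ContinuousOn e E)
    (he0 : ∀ x ∈ E, 0 ≤ e x) (hh : ∀ x ∈ E, HasDerivAt h (h' x) x) (hpos : ∀ x ∈ E, 0 < h x)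
    (hp : ∀ x ∈ E, HasDerivAt p (-(ρ x * f x)) x) (hpe : ∀ x ∈ E, p x = e x * h' x)
    (hcf : ∀ x ∈ E, c * h x ≤ f x) {g : ℝ → ℝ} (hg : DifferentiableOn ℝ g E)
    (hgc : HasCompactSupport g) (hgE : tsupport g ⊆ E) :
    c * ∫⁻ x, ENNReal.ofReal (g x ^ 2)
        ∂(volume.restrict E).withDensity (fun x => ENNReal.ofReal (ρ x))
      ≤ ∫⁻ x in E, ENNReal.ofReal (deriv g x ^ 2 * e x) := by
  obtain ⟨α, β, hαβ, hIE, hsupp⟩ := hEo.exists_Icc_subset_of_isCompact hEc hne hgc hgE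
  have hzero : ∀ x ∉ Ioo α β, g x = 0 := fun x hx =>
    image_eq_zero_of_notMem_tsupport fun hx' => hx (hsupp hx')
  have hEm := hEo.measurableSet
  have hgρ : IntegrableOn (fun x => g x ^ 2 * (c * ρ x)) (Icc α β) :=
    (((hg.continuousOn.pow 2).mul (continuousOn_const.mul hρ)).mono hIE).integrableOn_Icc
  have hmass : c * ∫⁻ x, ENNReal.ofReal (g x ^ 2)
      ∂(volume.restrict E).withDensity (fun x => ENNReal.ofReal (ρ x))
      = ∫⁻ x in Ioc α β, ENNReal.ofReal (g x ^ 2 * (c * ρ x)) := by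
    have hsuppc : (fun x => ENNReal.ofReal (g x ^ 2 * (c * ρ x))).support ⊆ Ioc α β :=
      Function.support_subset_iff'.2 fun x hx => by
        simp [hzero x fun h => hx (Ioo_subset_Ioc_self h)]
    rw [lintegral_withDensity_eq_lintegral_mul₀ (hρ.aemeasurable hEm).ennreal_ofReal
      (g := fun x => ENNReal.ofReal (g x ^ 2))
      ((hg.continuousOn.pow 2).aemeasurable hEm).ennreal_ofReal, ← lintegral_const_mul' _ _
      ENNReal.coe_ne_top, setLIntegral_eq_of_support_subset hsuppc,
      ← setLIntegral_eq_of_support_subset (hsuppc.trans (Ioc_subset_Icc_self.trans hIE))]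
    refine setLIntegral_congr_fun hEm fun x hx => ?_
    rw [Pi.mul_apply, ← ENNReal.ofReal_coe_nnreal, ← ENNReal.ofReal_mul (hρ0 x hx),
      ← ENNReal.ofReal_mul c.coe_nonneg]
    ring_nf
  rw [hmass, ← ofReal_intervalIntegral_eq_setLIntegral_Ioc hαβ hgρ fun x hx =>
    mul_nonneg (sq_nonneg _) (mul_nonneg c.coe_nonneg (hρ0 x (hIE (Ioc_subset_Icc_self hx))))]
  by_cases hfin : ∫⁻ x in E, ENNReal.ofReal (deriv g x ^ 2 * e x) = ⊤
  · exact hfin ▸ le_top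
  have he0' : ∀ x ∈ Icc α β, 0 ≤ deriv g x ^ 2 * e x := fun x hx =>
    mul_nonneg (sq_nonneg _) (he0 x (hIE hx))
  have hg'e : IntegrableOn (fun x => deriv g x ^ 2 * e x) (Icc α β) := by
    refine ⟨((measurable_deriv g).pow_const 2).aestronglyMeasurable.mul
      ((he.mono hIE).aestronglyMeasurable measurableSet_Icc), ?_⟩
    rw [hasFiniteIntegral_iff_ofReal (ae_restrict_of_forall_mem measurableSet_Icc he0')]
    exact (lintegral_mono_set hIE).trans_lt (lt_top_iff_ne_top.2 hfin)
  have hPicone := integral_sq_mul_le_integral_deriv_sq_mul hαβ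
    (fun x hx => (hg.differentiableAt (hEo.mem_nhds (hIE hx))).hasDerivAt)
    (fun x hx => hh x (hIE hx)) (fun x hx => hp x (hIE hx)) (fun x hx => hpe x (hIE hx))
    (fun x hx => hpos x (hIE hx)) (fun x hx => he0 x (hIE hx))
    (fun x hx => by linarith [mul_le_mul_of_nonneg_left (hcf x (hIE hx)) (hρ0 x (hIE hx))])
    (hzero α fun h => h.1.false) (hzero β fun h => h.2.false) hgρ hg'e
  calc ENNReal.ofReal (∫ x in α..β, g x ^ 2 * (c * ρ x))
      ≤ ENNReal.ofReal (∫ x in α..β, deriv g x ^ 2 * e x) := ENNReal.ofReal_le_ofReal hPicone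
    _ = ∫⁻ x in Ioc α β, ENNReal.ofReal (deriv g x ^ 2 * e x) :=
      ofReal_intervalIntegral_eq_setLIntegral_Ioc hαβ hg'e fun x hx =>
        he0' x (Ioc_subset_Icc_self hx)
    _ ≤ ∫⁻ x in E, ENNReal.ofReal (deriv g x ^ 2 * e x) :=
      lintegral_mono_set (Ioc_subset_Icc_self.trans hIE)

section GroundState

variable {E : Set ℝ} {u : ℝ} {w G : ℝ → ℝ}

theorem integrableOn_mul_intervalIntegral_of_halves
    (hm : IntegrableOn (fun x => w x * ∫ t in x..u, G t) (E ∩ Iic u))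
    (hp : IntegrableOn (fun x => w x * ∫ t in u..x, G t) (E ∩ Ici u)) :
    IntegrableOn (fun x => w x * ∫ t in x..u, G t) E := by
  have hp' : IntegrableOn (fun x => w x * ∫ t in x..u, G t) (E ∩ Ici u) := by
    simpa only [intervalIntegral.integral_symm u, mul_neg, Pi.neg_def] using hp.neg
  refine (hm.union hp').mono_set fun x hx => ?_
  rcases le_total x u with hxu | hxu
  exacts [Or.inl ⟨hx, hxu⟩, Or.inr ⟨hx, hxu⟩]

theorem setIntegral_inter_Ioi_eq_setIntegral_inter_Iio
    (hm : IntegrableOn (fun x => w x * ∫ t in x..u, G t) (E ∩ Iic u))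
    (hp : IntegrableOn (fun x => w x * ∫ t in u..x, G t) (E ∩ Ici u))
    (hroot : ∫ x in E ∩ Iio u, w x * ∫ t in x..u, G t
      = ∫ x in E ∩ Ioi u, w x * ∫ t in u..x, G t) (z : ℝ) :
    ∫ x in E ∩ Ioi z, w x * ∫ t in u..x, G t = ∫ x in E ∩ Iio z, w x * ∫ t in x..u, G t := by
  have hneg : ∀ z, ∫ x in E ∩ Ioi z, w x * ∫ t in u..x, G t
      = -∫ x in E ∩ Ioi z, w x * ∫ t in x..u, G t := fun z => by
    simp only [← integral_neg, intervalIntegral.integral_symm u, mul_neg, neg_neg]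
  have hW := integrableOn_mul_intervalIntegral_of_halves hm hp
  have hz := setIntegral_inter_Iio_add_inter_Ioi hW z
  have hu := setIntegral_inter_Iio_add_inter_Ioi hW u
  rw [hneg] at hroot ⊢
  linarith

theorem setIntegral_inter_Iio_mul_pos (hEo : IsOpen E) (hEc : E.OrdConnected) (hu : u ∈ E)
    (hw : ∀ x ∈ E, 0 < w x) (hG : ContinuousOn G E) (hGpos : ∀ x ∈ E, 0 < G x)
    (hm : IntegrableOn (fun x => w x * ∫ t in x..u, G t) (E ∩ Iic u))
    (hp : IntegrableOn (fun x => w x * ∫ t in u..x, G t) (E ∩ Ici u))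
    (hroot : ∫ x in E ∩ Iio u, w x * ∫ t in x..u, G t
      = ∫ x in E ∩ Ioi u, w x * ∫ t in u..x, G t) {z : ℝ} (hz : z ∈ E) :
    0 < ∫ x in E ∩ Iio z, w x * ∫ t in x..u, G t := by
  rcases le_total z u with hzu | hzu
  · exact (hEo.inter isOpen_Iio).setIntegral_pos (hEo.nonempty_inter_Iio hz)
      (hm.mono_set (inter_subset_inter_right E (Iio_subset_Iic_self.trans
        (Iic_subset_Iic.2 hzu))))
      fun x hx => mul_pos (hw x hx.1)
        (hEc.intervalIntegral_pos hG hGpos hx.1 hu (hx.2.trans_le hzu))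
  · rw [← setIntegral_inter_Ioi_eq_setIntegral_inter_Iio hm hp hroot]
    exact (hEo.inter isOpen_Ioi).setIntegral_pos (hEo.nonempty_inter_Ioi hz)
      (hp.mono_set (inter_subset_inter_right E (Ioi_subset_Ici_self.trans
        (Ici_subset_Ici.2 hzu))))
      fun x hx => mul_pos (hw x hx.1)
        (hEc.intervalIntegral_pos hG hGpos hu hx.1 (hzu.trans_lt hx.2))

theorem Set.OrdConnected.hasDerivAt_setIntegral_inter_Iio_mul (hEc : E.OrdConnected)
    (hEo : IsOpen E) (hu : u ∈ E) (hw : ContinuousOn w E) (hG : ContinuousOn G E)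
    (hm : IntegrableOn (fun x => w x * ∫ t in x..u, G t) (E ∩ Iic u))
    (hp : IntegrableOn (fun x => w x * ∫ t in u..x, G t) (E ∩ Ici u)) {z : ℝ} (hz : z ∈ E) :
    HasDerivAt (fun y => ∫ x in E ∩ Iio y, w x * ∫ t in x..u, G t) (w z * ∫ t in z..u, G t) z :=
  hEc.hasDerivAt_setIntegral_inter_Iio hEo (integrableOn_mul_intervalIntegral_of_halves hm hp)
    (hw.mul fun _ hx =>
      (hEc.hasDerivAt_intervalIntegral_left hEo hG hu hx).continuousAt.continuousWithinAt) hz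

end GroundState

theorem variational_lower_bound_DD_general
    (M N : EReal)
    (E : Set ℝ) (hE : E = {x : ℝ | -M < (x : EReal) ∧ (x : EReal) < N})
    (a b : ℝ → ℝ)
    (ha : ContinuousOn a E) (hb : ContinuousOn b E)
    (hapos : ∀ x ∈ E, 0 < a x)
    (θ₀ : ℝ) (hθ₀ : θ₀ ∈ E)
    (C : ℝ → ℝ) (hC : ∀ x, C x = ∫ t in θ₀..x, b t / a t)
    (μ : Measure ℝ)
    (hμ : μ = (volume.restrict E).withDensity fun x => ENNReal.ofReal (Real.exp (C x) / a x))
    (f : ℝ → ℝ) (hfc : ContinuousOn f E) (hfpos : ∀ x ∈ E, 0 < f x)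
    (u : ℝ) (hu : u ∈ E)
    (hm hp : ℝ → ℝ)
    -- h⁻(z) = ∫_{-M}^z e^{-C(x)} ( ∫_x^u e^{C(t)} f(t)/a(t) dt ) dx
    (hhm : ∀ z, hm z =
        ∫ x in E ∩ Iio z, Real.exp (-C x) * ∫ t in x..u, Real.exp (C t) * f t / a t)
    -- h⁺(z) = ∫_z^N e^{-C(x)} ( ∫_u^x e^{C(t)} f(t)/a(t) dt ) dx
    (hhp : ∀ z, hp z =
        ∫ x in E ∩ Ioi z, Real.exp (-C x) * ∫ t in u..x, Real.exp (C t) * f t / a t)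
    -- h⁻ and h⁺ are finite
    (hmfin : IntegrableOn
        (fun x => Real.exp (-C x) * ∫ t in x..u, Real.exp (C t) * f t / a t) (E ∩ Iic u))
    (hpfin : IntegrableOn
        (fun x => Real.exp (-C x) * ∫ t in u..x, Real.exp (C t) * f t / a t) (E ∩ Ici u))
    -- h⁻(u) = h⁺(u)
    (hroot : hm u = hp u)
    (lam : ℝ≥0∞)
    -- λ^DD : infimum of D(g) over absolutely continuous g with compact support in E,
    -- ∫ g² dμ = 1
    (hlam : lam = ⨅ (g : ℝ → ℝ) (_ : DifferentiableOn ℝ g E) (_ : HasCompactSupport g)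
        (_ : tsupport g ⊆ E) (_ : ∫⁻ x, ENNReal.ofReal ((g x) ^ 2) ∂μ = 1),
        ∫⁻ x in E, ENNReal.ofReal ((deriv g x) ^ 2 * Real.exp (C x))) :
    min (⨅ (z : ℝ) (_ : z ∈ E ∩ Iio u), ENNReal.ofReal (f z / hm z))
        (⨅ (z : ℝ) (_ : z ∈ E ∩ Ioi u), ENNReal.ofReal (f z / hp z)) ≤ lam := by
  obtain ⟨hEo, hEc⟩ : IsOpen E ∧ E.OrdConnected := by
    rw [hE]; exact EReal.isOpen_and_ordConnected_preimage_Ioo (-M) N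
  have hCc : ContinuousOn C E := by
    rw [funext hC]
    exact fun x hx => (hEc.hasDerivAt_intervalIntegral hEo
      (hb.div ha fun y hy => (hapos y hy).ne') hθ₀ hx).continuousAt.continuousWithinAt
  have hGc : ContinuousOn (fun t => Real.exp (C t) * f t / a t) E :=
    (hCc.rexp.mul hfc).div ha fun x hx => (hapos x hx).ne'
  have hGpos : ∀ x ∈ E, 0 < Real.exp (C x) * f x / a x := fun x hx =>
    div_pos (mul_pos (Real.exp_pos _) (hfpos x hx)) (hapos x hx)
  rw [hhm, hhp] at hroot
  obtain rfl : hm = hp := funext fun z => by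
    rw [hhp, hhm, setIntegral_inter_Ioi_eq_setIntegral_inter_Iio hmfin hpfin hroot]
  have hmpos : ∀ z ∈ E, 0 < hm z := fun z hz => (hhm z).symm ▸
    setIntegral_inter_Iio_mul_pos hEo hEc hu (fun x _ => Real.exp_pos _) hGc hGpos hmfin hpfin
      hroot hz
  have hmd : ∀ z ∈ E, HasDerivAt hm
      (Real.exp (-C z) * ∫ t in z..u, Real.exp (C t) * f t / a t) z := by
    rw [funext hhm]
    exact fun z => hEc.hasDerivAt_setIntegral_inter_Iio_mul hEo hu hCc.neg.rexp hGc hmfin hpfin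
  rw [hlam]
  refine ENNReal.le_of_forall_nnreal_lt fun c hc => le_iInf fun g => le_iInf fun hg =>
    le_iInf fun hgc => le_iInf fun hgE => le_iInf fun hg1 => ?_
  have hlower := coe_mul_lintegral_sq_le_lintegral_deriv_sq_mul hEo hEc ⟨u, hu⟩
    (ρ := fun x => Real.exp (C x) / a x) (e := fun x => Real.exp (C x))
    (hCc.rexp.div ha fun x hx => (hapos x hx).ne')
    (fun x hx => div_nonneg (Real.exp_pos _).le (hapos x hx).le) hCc.rexp
    (fun x _ => (Real.exp_pos _).le) hmd hmpos
    (fun x hx => (hEc.hasDerivAt_intervalIntegral_left hEo hGc hu hx).congr_deriv (by ring))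
    (fun x _ => by rw [← mul_assoc, ← Real.exp_add, add_neg_cancel, Real.exp_zero, one_mul])
    (mul_le_of_le_min_iInf_ofReal_div hEo hfc
      (fun x hx => (hmd x hx).continuousAt.continuousWithinAt) (fun x hx => (hfpos x hx).le)
      hmpos hu hc.le) hg hgc hgE
  rwa [← hμ, hg1, mul_one] at hlower

/-- Variational lower bound, DD-case (Theorem 3.3, '≥' direction):
if `h⁻(u) = h⁺(u)` for a continuous strictly positive `f` and `u ∈ E`, then
`λ^DD ≥ min( inf_{z∈(-M,u)} f(z)/h⁻(z), inf_{z∈(u,N)} f(z)/h⁺(z) )`. -/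
theorem variational_lower_bound_DD
    (M N : EReal) (hM : 0 < M) (hN : 0 < N)
    (E : Set ℝ) (hE : E = {x : ℝ | -M < (x : EReal) ∧ (x : EReal) < N})
    (a b : ℝ → ℝ)
    (ha : ContinuousOn a E) (hb : ContinuousOn b E)
    (hapos : ∀ x ∈ E, 0 < a x)
    (θ₀ : ℝ) (hθ₀ : θ₀ ∈ E)
    (C : ℝ → ℝ) (hC : ∀ x, C x = ∫ t in θ₀..x, b t / a t)
    (μ ν : Measure ℝ)
    (hμ : μ = (volume.restrict E).withDensity fun x => ENNReal.ofReal (Real.exp (C x) / a x))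
    (hν : ν = (volume.restrict E).withDensity fun x => ENNReal.ofReal (Real.exp (-C x)))
    (hνfin : ν E < ⊤)
    (f : ℝ → ℝ) (hfc : ContinuousOn f E) (hfpos : ∀ x ∈ E, 0 < f x)
    (u : ℝ) (hu : u ∈ E)
    (hm hp : ℝ → ℝ)
    -- h⁻(z) = ∫_{-M}^z e^{-C(x)} ( ∫_x^u e^{C(t)} f(t)/a(t) dt ) dx
    (hhm : ∀ z, hm z =
        ∫ x in E ∩ Iio z, Real.exp (-C x) * ∫ t in x..u, Real.exp (C t) * f t / a t)
    -- h⁺(z) = ∫_z^N e^{-C(x)} ( ∫_u^x e^{C(t)} f(t)/a(t) dt ) dx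
    (hhp : ∀ z, hp z =
        ∫ x in E ∩ Ioi z, Real.exp (-C x) * ∫ t in u..x, Real.exp (C t) * f t / a t)
    -- h⁻ and h⁺ are finite
    (hmfin : IntegrableOn
        (fun x => Real.exp (-C x) * ∫ t in x..u, Real.exp (C t) * f t / a t) (E ∩ Iic u))
    (hpfin : IntegrableOn
        (fun x => Real.exp (-C x) * ∫ t in u..x, Real.exp (C t) * f t / a t) (E ∩ Ici u))
    -- h⁻(u) = h⁺(u)
    (hroot : hm u = hp u)
    (lam : ℝ≥0∞)
    -- λ^DD : infimum of D(g) over absolutely continuous g with compact support in E,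
    -- ∫ g² dμ = 1
    (hlam : lam = ⨅ (g : ℝ → ℝ) (_ : DifferentiableOn ℝ g E) (_ : HasCompactSupport g)
        (_ : tsupport g ⊆ E) (_ : ∫⁻ x, ENNReal.ofReal ((g x) ^ 2) ∂μ = 1),
        ∫⁻ x in E, ENNReal.ofReal ((deriv g x) ^ 2 * Real.exp (C x))) :
    min (⨅ (z : ℝ) (_ : z ∈ E ∩ Iio u), ENNReal.ofReal (f z / hm z))
        (⨅ (z : ℝ) (_ : z ∈ E ∩ Ioi u), ENNReal.ofReal (f z / hp z)) ≤ lam :=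
  variational_lower_bound_DD_general M N E hE a b ha hb hapos θ₀ hθ₀ C hC μ hμ f hfc hfpos u hu hm
    hp hhm hhp hmfin hpfin hroot lam hlam
end
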